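/- arXiv:2510.14971 — 6 statements merged into one kernel-verified Lean document; each statement's English description precedes it below -/
import Mathlib

section
/- Let G be a finite group and let h be a positive integer. If q_h(G) > q_h(D_8) = (1/2)(1 + 1/2^{2h}), then G is abelian. (Here D_8 denotes the dihedral group of order 8, whose complex irreducible character degrees are 1, 1, 1, 1, 2.) -/
open CategoryTheory Module

section QhAux
open scoped Classical

noncomputable section


variable {G : Type} [Group G] [Fintype G]


lemma GT1 (hna : ¬ ∀ a b : G, a * b = b * a) :
    4 * Nat.card (Subgroup.center G) ≤ Nat.card G := by
  have hcard := Subgroup.card_eq_card_quotient_mul_card_subgroup (Subgroup.center G)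
  have hq : 4 ≤ Nat.card (G ⧸ Subgroup.center G) := by
    by_contra hlt
    push_neg at hlt
    have hpos : 0 < Nat.card (G ⧸ Subgroup.center G) := Nat.card_pos
    have hcyc : IsCyclic (G ⧸ Subgroup.center G) := by
      interval_cases h : Nat.card (G ⧸ Subgroup.center G)
      · have : Subsingleton (G ⧸ Subgroup.center G) := (Nat.card_eq_one_iff_unique.mp h).1
        infer_instance
      · exact @isCyclic_of_prime_card _ _ 2 ⟨Nat.prime_two⟩ h
      · exact @isCyclic_of_prime_card _ _ 3 ⟨Nat.prime_three⟩ h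
    exact hna (commutative_of_cyclic_center_quotient (QuotientGroup.mk' (Subgroup.center G))
      (by rw [QuotientGroup.ker_mk']))
  calc 4 * Nat.card (Subgroup.center G)
      ≤ Nat.card (G ⧸ Subgroup.center G) * Nat.card (Subgroup.center G) :=
        Nat.mul_le_mul_right _ hq
    _ = Nat.card G := hcard.symm


open scoped commutatorElement in
lemma GT3 (hna : ¬ ∀ a b : G, a * b = b * a) :
    2 * Nat.card (Abelianization G) ≤ Nat.card G := by
  push_neg at hna
  obtain ⟨a, b, hab⟩ := hna
  have hmem : ⁅a, b⁆ ∈ commutator G :=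
    Subgroup.commutator_mem_commutator (Subgroup.mem_top a) (Subgroup.mem_top b)
  have hne : ⁅a, b⁆ ≠ 1 := fun hc => hab (commutatorElement_eq_one_iff_mul_comm.mp hc)
  have hnontriv : Nontrivial (commutator G) :=
    ⟨⟨⟨_, hmem⟩, 1, by simpa [Subtype.ext_iff] using hne⟩⟩
  have h2 : 2 ≤ Nat.card (commutator G) := Finite.one_lt_card
  have hcard := Subgroup.card_eq_card_quotient_mul_card_subgroup (commutator G)
  calc 2 * Nat.card (Abelianization G)
      ≤ Nat.card (commutator G) * Nat.card (G ⧸ commutator G) := by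
        have h : Nat.card (Abelianization G) = Nat.card (G ⧸ commutator G) := rfl
        rw [h]; exact Nat.mul_le_mul_right _ h2
    _ = Nat.card G := by rw [hcard, mul_comm]

lemma GT2 : 2 * Nat.card (ConjClasses G) ≤ Nat.card G + Nat.card (Subgroup.center G) := by
  classical
  have key := Group.nat_card_center_add_sum_card_noncenter_eq_card G
  set S : Set (ConjClasses G) := ConjClasses.noncenter G with hS
  have hfin : Finite (ConjClasses G) := Quotient.finite _
  have hfintype : Fintype (ConjClasses G) := Fintype.ofFinite _
  have hsum : ∑ᶠ x ∈ S, Nat.card x.carrier = ∑ x ∈ S.toFinset, Nat.card x.carrier := by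
    rw [← finsum_mem_coe_finset, Set.coe_toFinset]
  have hterm : ∀ x ∈ S.toFinset, 2 ≤ Nat.card x.carrier := by
    intro x hx
    rw [Set.mem_toFinset] at hx
    rw [hS, ConjClasses.mem_noncenter] at hx
    have hfc : x.carrier.Finite := Set.toFinite _
    rw [Nat.card_coe_set_eq]
    exact (Set.one_lt_ncard hfc).mpr hx
  have hge : 2 * S.toFinset.card ≤ ∑ x ∈ S.toFinset, Nat.card x.carrier := by
    calc 2 * S.toFinset.card = ∑ _x ∈ S.toFinset, 2 := by
          rw [Finset.sum_const, smul_eq_mul, mul_comm]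
      _ ≤ _ := Finset.sum_le_sum hterm
  have hcompl : Nat.card (Subgroup.center G) = S.toFinsetᶜ.card := by
    have e : (↑(Subgroup.center G) : Set G) ≃ ↑(Sᶜ) := (ConjClasses.mk_bijOn G).equiv _
    calc Nat.card (Subgroup.center G) = Nat.card ↑(Sᶜ) := Nat.card_congr e
      _ = (Sᶜ).toFinset.card := by rw [Nat.card_coe_set_eq, Set.ncard_eq_toFinset_card']
      _ = S.toFinsetᶜ.card := by rw [Set.toFinset_compl]
  have h1 : S.toFinset.card + S.toFinsetᶜ.card = Fintype.card (ConjClasses G) :=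
    Finset.card_add_card_compl _
  rw [Nat.card_eq_fintype_card]
  omega



noncomputable section

lemma trace_mul_finrank_one {V : Type} [AddCommGroup V] [Module ℂ V] (h : finrank ℂ V = 1)
    (f g : V →ₗ[ℂ] V) :
    LinearMap.trace ℂ V (f ∘ₗ g) = LinearMap.trace ℂ V f * LinearMap.trace ℂ V g := by
  classical
  let b := Module.basisUnique (Fin 1) h
  rw [LinearMap.trace_eq_matrix_trace ℂ b, LinearMap.trace_eq_matrix_trace ℂ b,
    LinearMap.trace_eq_matrix_trace ℂ b, LinearMap.toMatrix_comp b b b]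
  rw [Matrix.trace_fin_one, Matrix.trace_fin_one, Matrix.trace_fin_one, Matrix.mul_apply,
    Fin.sum_univ_one]

variable {G : Type} [Group G] [Fintype G]

lemma char_mul_of_finrank_one (W : FDRep ℂ G) (h1 : finrank ℂ W = 1) (g g' : G) :
    W.character (g * g') = W.character g * W.character g' := by
  show LinearMap.trace ℂ W (W.ρ (g * g')) = _
  rw [map_mul]
  exact trace_mul_finrank_one h1 _ _

lemma char_orth (ι : Type) (V : ι → FDRep ℂ G) (hsim : ∀ i, Simple (V i)) (i j : ι) :
    ((Fintype.card G : ℂ))⁻¹ * ∑ g : G, (V i).character g * (V j).character g⁻¹ =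
      if Nonempty (V i ≅ V j) then 1 else 0 := by
  classical
  haveI := hsim i
  haveI := hsim j
  have h := FDRep.char_orthonormal (k := ℂ) (G := G) (V i) (V j)
  rw [Nat.card_eq_fintype_card] at h
  exact h

variable {ι : Type} [Fintype ι] {V : ι → FDRep ℂ G}

lemma char_inj (hsim : ∀ i, Simple (V i)) (hdist : ∀ i j : ι, Nonempty (V i ≅ V j) → i = j)
    {i j : ι} (hc : (V i).character = (V j).character) : i = j := by
  apply hdist
  by_contra hne
  have h1 := char_orth ι V hsim j j
  have h2 := char_orth ι V hsim i j
  rw [if_pos ⟨Iso.refl _⟩] at h1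
  rw [hc, h1, if_neg hne] at h2
  exact one_ne_zero h2

lemma card_le_conjClasses (hsim : ∀ i, Simple (V i))
    (hdist : ∀ i j : ι, Nonempty (V i ≅ V j) → i = j) :
    Fintype.card ι ≤ Nat.card (ConjClasses G) := by
  classical
  haveI : Fintype (ConjClasses G) := Fintype.ofFinite _
  have hwd : ∀ i (a b : G), @Setoid.r G (IsConj.setoid G) a b →
      (V i).character a = (V i).character b := by
    intro i a b hab
    have hab' : IsConj a b := hab
    obtain ⟨c, hc⟩ := isConj_iff.mp hab'
    rw [← hc, FDRep.char_conj]
  let cf : ι → (ConjClasses G → ℂ) := fun i c => Quotient.liftOn' c ((V i).character) (hwd i)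
  have hli : LinearIndependent ℂ cf := by
    rw [Fintype.linearIndependent_iff]
    intro c hc j
    have heval : ∀ g : G, ∑ i, c i * (V i).character g = 0 := by
      intro g
      have := congrFun hc (ConjClasses.mk g)
      simp [cf] at this
      exact this
    have key : ∑ i, c i * (((Fintype.card G : ℂ))⁻¹ *
        ∑ g : G, (V i).character g * (V j).character g⁻¹) = c j := by
      have hterm : ∀ i, c i * (((Fintype.card G : ℂ))⁻¹ *
          ∑ g : G, (V i).character g * (V j).character g⁻¹)
          = c i * if i = j then 1 else 0 := by
        intro i
        rw [char_orth ι V hsim i j]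
        congr 1
        by_cases hij : i = j
        · subst hij; rw [if_pos ⟨Iso.refl _⟩, if_pos rfl]
        · rw [if_neg (fun hn => hij (hdist i j hn)), if_neg hij]
      rw [Finset.sum_congr rfl (fun i _ => hterm i)]
      simp
    have swap : ∑ i, c i * (((Fintype.card G : ℂ))⁻¹ *
        ∑ g : G, (V i).character g * (V j).character g⁻¹) = 0 := by
      calc ∑ i, c i * (((Fintype.card G : ℂ))⁻¹ *
              ∑ g : G, (V i).character g * (V j).character g⁻¹)
          = ∑ i, ∑ g : G, ((Fintype.card G : ℂ))⁻¹ *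
              (c i * (V i).character g * (V j).character g⁻¹) := by
            refine Finset.sum_congr rfl (fun i _ => ?_)
            rw [Finset.mul_sum, Finset.mul_sum]
            exact Finset.sum_congr rfl (fun g _ => by ring)
        _ = ∑ g : G, ∑ i, ((Fintype.card G : ℂ))⁻¹ *
              (c i * (V i).character g * (V j).character g⁻¹) := Finset.sum_comm
        _ = ∑ g : G, ((Fintype.card G : ℂ))⁻¹ *
              ((∑ i, c i * (V i).character g) * (V j).character g⁻¹) := by
            refine Finset.sum_congr rfl (fun g _ => ?_)
            rw [Finset.sum_mul, Finset.mul_sum]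
            try exact Finset.sum_congr rfl (fun i _ => by ring)
        _ = 0 := by simp [heval]
    rw [← key, swap]
  have hle := hli.fintype_card_le_finrank
  rw [Nat.card_eq_fintype_card]
  rwa [Module.finrank_fintype_fun_eq_card] at hle

def multAddHom : Multiplicative (Additive (Abelianization G)) →* Abelianization G where
  toFun x := x.toAdd.toMul
  map_one' := rfl
  map_mul' _ _ := rfl

noncomputable def toAddChar (f : G →* ℂ) : AddChar (Additive (Abelianization G)) ℂ :=
  AddChar.toMonoidHomEquiv.symm <|
    (Units.coeHom ℂ).comp ((Abelianization.lift f.toHomUnits).comp multAddHom)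

lemma toAddChar_apply (f : G →* ℂ) (x : G) :
    toAddChar f (Additive.ofMul (Abelianization.of x)) = f x := by
  simp [toAddChar, multAddHom]

lemma toAddChar_injective : Function.Injective (toAddChar (G := G)) := by
  intro f g hfg
  ext x
  have := congrArg (fun ψ => ψ (Additive.ofMul (Abelianization.of x))) hfg
  simpa [toAddChar_apply] using this

lemma onedim_card_le (hsim : ∀ i, Simple (V i))
    (hdist : ∀ i j : ι, Nonempty (V i ≅ V j) → i = j) :
    Nat.card {i : ι // finrank ℂ (V i) = 1} ≤ Nat.card (Abelianization G) := by
  classical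
  haveI : Finite (Abelianization G) := Quotient.finite _
  letI : Fintype (Abelianization G) := Fintype.ofFinite _
  letI : Fintype (Additive (Abelianization G)) := ‹Fintype (Abelianization G)›
  have hhom : ∀ i : {i : ι // finrank ℂ (V i) = 1}, ∃ f : G →* ℂ, ⇑f = (V i.1).character := by
    rintro ⟨i, h1⟩
    refine ⟨⟨⟨(V i).character, ?_⟩, ?_⟩, rfl⟩
    · rw [FDRep.char_one, h1]; norm_num
    · exact fun g g' => char_mul_of_finrank_one (V i) h1 g g'
  choose f hf using hhom
  have hfinj : Function.Injective f := by
    intro i j hij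
    have : (V i.1).character = (V j.1).character := by rw [← hf i, ← hf j, hij]
    exact Subtype.ext (char_inj hsim hdist this)
  have hmain : Function.Injective (fun i => toAddChar (f i)) :=
    toAddChar_injective.comp hfinj
  calc Nat.card {i : ι // finrank ℂ (V i) = 1}
      ≤ Nat.card (AddChar (Additive (Abelianization G)) ℂ) :=
        Nat.card_le_card_of_injective _ hmain
    _ = Nat.card (Abelianization G) := by
        rw [Nat.card_eq_fintype_card, Nat.card_eq_fintype_card]
        exact AddChar.card_eq


end
end
end QhAux

/-- **Theorem (genus-h abelian criterion).**
If `q_h(G) > q_h(D_8) = (1/2)(1 + 1/2^(2h))`, then `G` is abelian.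
Here `q_h(G) = (1/|G|) * Σ_{χ ∈ Irr(G)} (1/χ(1))^(2h-2)`; the irreducible complex
characters of `G` are encoded by a complete family `V : ι → FDRep ℂ G` of pairwise
non-isomorphic simple representations, with `χ(1) = finrank ℂ (V i)`. -/
theorem qh_gt_D8_imp_abelian (G : Type) [Group G] [Fintype G] (h : ℕ) (hh : 1 ≤ h)
    (ι : Type) [Fintype ι] (V : ι → FDRep ℂ G)
    (hsim : ∀ i, Simple (V i))
    (hdist : ∀ i j : ι, Nonempty (V i ≅ V j) → i = j)
    (hcomp : ∀ W : FDRep ℂ G, Simple W → ∃ i, Nonempty (W ≅ V i))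
    (hq : (Nat.card G : ℝ)⁻¹ * ∑ i, ((finrank ℂ (V i) : ℝ))⁻¹ ^ (2 * h - 2)
          > (1 / 2) * (1 + 1 / 2 ^ (2 * h))) :
    ∀ a b : G, a * b = b * a := by
  classical
  by_contra hna
  -- integer facts
  have hZ := GT1 hna
  have hC := GT2 (G := G)
  have hk := card_le_conjClasses hsim hdist
  have h8k : 8 * Fintype.card ι ≤ 5 * Nat.card G := by omega
  have hM := GT3 hna
  have hA' := onedim_card_le hsim hdist
  set A : Finset ι := Finset.univ.filter (fun i => finrank ℂ (V i) = 1) with hAdef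
  have hAcard : Nat.card {i : ι // finrank ℂ (V i) = 1} = A.card := by
    rw [Nat.card_eq_fintype_card, Fintype.card_subtype]
  have h2a : 2 * A.card ≤ Nat.card G := by omega
  -- real arithmetic
  set N : ℝ := (Nat.card G : ℝ) with hN
  have hNpos : (0:ℝ) < N := by
    rw [hN]; exact_mod_cast Nat.card_pos
  set t : ℝ := ((2:ℝ)⁻¹) ^ (2 * h - 2) with htdef
  have htpos : 0 < t := by positivity
  have htle : t ≤ 1 := pow_le_one₀ (by norm_num) (by norm_num)
  -- term bounds
  have hterm1 : ∀ i ∈ A, ((finrank ℂ (V i) : ℝ))⁻¹ ^ (2 * h - 2) = 1 := by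
    intro i hi
    rw [hAdef, Finset.mem_filter] at hi
    rw [hi.2]
    norm_num
  have hterm2 : ∀ i ∈ Aᶜ, ((finrank ℂ (V i) : ℝ))⁻¹ ^ (2 * h - 2) ≤ t := by
    intro i hi
    rw [Finset.mem_compl, hAdef, Finset.mem_filter] at hi
    have hne : finrank ℂ (V i) ≠ 1 := fun hcontr => hi ⟨Finset.mem_univ i, hcontr⟩
    rcases Nat.lt_or_ge (finrank ℂ (V i)) 2 with hlt | hge
    · have h0 : finrank ℂ (V i) = 0 := by omega
      rw [h0]
      rcases Nat.eq_zero_or_pos (2 * h - 2) with he | he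
      · rw [he]; simp [htdef, he]
      · rw [Nat.cast_zero, inv_zero, zero_pow (by omega)]
        exact htpos.le
    · rw [htdef]
      apply pow_le_pow_left₀ (by positivity)
      rw [inv_le_inv₀ (by exact_mod_cast (by omega : 0 < finrank ℂ (V i))) (by norm_num)]
      exact_mod_cast hge
  -- sum bound
  have hsplit : ∑ i, ((finrank ℂ (V i) : ℝ))⁻¹ ^ (2 * h - 2)
      = ∑ i ∈ A, ((finrank ℂ (V i) : ℝ))⁻¹ ^ (2 * h - 2)
        + ∑ i ∈ Aᶜ, ((finrank ℂ (V i) : ℝ))⁻¹ ^ (2 * h - 2) :=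
    (Finset.sum_add_sum_compl A _).symm
  have hsA : ∑ i ∈ A, ((finrank ℂ (V i) : ℝ))⁻¹ ^ (2 * h - 2) = (A.card : ℝ) := by
    rw [Finset.sum_congr rfl hterm1, Finset.sum_const, nsmul_eq_mul, mul_one]
  have hsC : ∑ i ∈ Aᶜ, ((finrank ℂ (V i) : ℝ))⁻¹ ^ (2 * h - 2) ≤ (Aᶜ.card : ℝ) * t := by
    calc ∑ i ∈ Aᶜ, ((finrank ℂ (V i) : ℝ))⁻¹ ^ (2 * h - 2) ≤ ∑ _i ∈ Aᶜ, t :=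
          Finset.sum_le_sum hterm2
      _ = (Aᶜ.card : ℝ) * t := by rw [Finset.sum_const, nsmul_eq_mul]
  have hcompl : (Aᶜ.card : ℝ) = (Fintype.card ι : ℝ) - (A.card : ℝ) := by
    rw [Finset.card_compl]
    have : A.card ≤ Fintype.card ι := by
      rw [← Finset.card_univ]; exact Finset.card_le_univ A
    push_cast [Nat.cast_sub this]
    ring
  -- the exponent identity
  have hexp : 2 * h - 2 + 2 = 2 * h := by omega
  have h4 : (1:ℝ) / 2 ^ (2 * h) = t / 4 := by
    have h2 : ((2:ℝ)) ^ (2 * h) = (2:ℝ) ^ (2 * h - 2) * 4 := by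
      rw [← hexp, pow_add]; norm_num
    rw [h2, htdef, inv_pow]
    rw [div_eq_mul_inv, div_eq_mul_inv, mul_inv]
    ring
  -- assemble
  have hS : ∑ i, ((finrank ℂ (V i) : ℝ))⁻¹ ^ (2 * h - 2)
      ≤ (A.card : ℝ) * (1 - t) + (Fintype.card ι : ℝ) * t := by
    rw [hsplit, hsA]
    have := hsC
    rw [hcompl] at this
    nlinarith
  have hq' : N * ((1 / 2) * (1 + t / 4)) < ∑ i, ((finrank ℂ (V i) : ℝ))⁻¹ ^ (2 * h - 2) := by
    rw [← h4]
    have := hq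
    rw [gt_iff_lt, inv_mul_eq_div, lt_div_iff₀ hNpos] at this
    linarith [this]
  have ha : (A.card : ℝ) ≤ N / 2 := by
    rw [hN]
    have : (2 * A.card : ℕ) ≤ (Nat.card G : ℕ) := h2a
    have := (Nat.cast_le (α := ℝ)).mpr this
    push_cast at this
    linarith
  have hkk : (Fintype.card ι : ℝ) ≤ 5 * N / 8 := by
    rw [hN]
    have := (Nat.cast_le (α := ℝ)).mpr h8k
    push_cast at this
    linarith
  nlinarith [htpos, htle, hS, hq', ha, hkk, hNpos]
end

section
/- Let G be a finite group and let h be a positive integer. If q_h(G) > q_h(S_3) = (1/3)(1 + 1/2^{2h-1}), then G is nilpotent. (Here S_3 denotes the symmetric group of degree 3, whose complex irreducible character degrees are 1, 1, 2.) -/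
open CategoryTheory Module

section Aux
open Polynomial
open scoped ComplexInnerProductSpace

-- eigenvector under powers
private lemma pow_apply_eig {V : Type} [AddCommGroup V] [Module ℂ V]
    (A : Module.End ℂ V) (μ : ℂ) {x : V} (hx : x ∈ A.eigenspace μ) (k : ℕ) :
    (A ^ k) x = μ ^ k • x := by
  induction k with
  | zero => simp
  | succ k ih =>
    rw [pow_succ, Module.End.mul_apply, Module.End.mem_eigenspace_iff.mp hx, map_smul, ih,
      smul_smul, pow_succ, mul_comm]

private lemma real_pow_eq_one {a : ℝ} (ha : 0 ≤ a) {n : ℕ} (hn : 0 < n) (h : a ^ n = 1) :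
    a = 1 := by
  rcases lt_trichotomy a 1 with h1 | h1 | h1
  · have := pow_lt_one₀ ha h1 hn.ne'
    rw [h] at this; exact absurd this (lt_irrefl 1)
  · exact h1
  · have := one_lt_pow₀ h1 hn.ne'
    rw [h] at this; exact absurd this (lt_irrefl 1)

theorem trace_pow_pred_conj {V : Type} [AddCommGroup V] [Module ℂ V] [FiniteDimensional ℂ V]
    (A : Module.End ℂ V) {n : ℕ} (hn : 0 < n) (hA : A ^ n = 1) :
    LinearMap.trace ℂ V (A ^ (n - 1)) = starRingEnd ℂ (LinearMap.trace ℂ V A) := by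
  classical
  have hsep : (X ^ n - C (1 : ℂ)).Separable :=
    Polynomial.separable_X_pow_sub_C 1 (by exact_mod_cast Nat.cast_ne_zero.mpr hn.ne') one_ne_zero
  have haev : aeval A (X ^ n - C (1 : ℂ)) = 0 := by
    simp [map_sub, aeval_X_pow, hA]
  have hss : A.IsSemisimple :=
    Module.End.isSemisimple_of_squarefree_aeval_eq_zero hsep.squarefree haev
  have htop : ⨆ μ : ℂ, A.eigenspace μ = ⊤ := by
    have h1 := Module.End.iSup_maxGenEigenspace_eq_top A
    have h2 : ∀ μ : ℂ, A.maxGenEigenspace μ = A.eigenspace μ := fun μ =>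
      hss.isFinitelySemisimple.maxGenEigenspace_eq_eigenspace μ
    simpa [h2] using h1
  have hint : DirectSum.IsInternal (fun μ : ℂ => A.eigenspace μ) :=
    (DirectSum.isInternal_submodule_iff_iSupIndep_and_iSup_eq_top _).mpr
      ⟨A.eigenspaces_iSupIndep, htop⟩
  have hfin : {μ : ℂ | A.eigenspace μ ≠ ⊥}.Finite := by
    apply Set.Finite.subset (Polynomial.finite_setOf_isRoot (minpoly.ne_zero (LinearMap.isIntegral A)))
    intro μ hμ
    exact (Module.End.hasEigenvalue_iff_isRoot).mp hμ
  have hmapsA : ∀ μ : ℂ, Set.MapsTo A (A.eigenspace μ) (A.eigenspace μ) := fun μ =>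
    Module.End.mapsTo_genEigenspace_of_comm rfl μ 1
  have hmapsB : ∀ μ : ℂ, Set.MapsTo (A ^ (n - 1)) (A.eigenspace μ) (A.eigenspace μ) := fun μ =>
    Module.End.mapsTo_genEigenspace_of_comm ((Commute.refl A).pow_right _) μ 1
  have htrA := LinearMap.trace_eq_sum_trace_restrict' hint hfin hmapsA
  have htrB := LinearMap.trace_eq_sum_trace_restrict' hint hfin hmapsB
  -- each eigenvalue in the finset satisfies μ ^ n = 1
  have hroot : ∀ μ ∈ hfin.toFinset, μ ^ n = 1 := by
    intro μ hμ
    rw [Set.Finite.mem_toFinset] at hμ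
    obtain ⟨x, hx, hx0⟩ := Submodule.exists_mem_ne_zero_of_ne_bot hμ
    have := pow_apply_eig A μ hx n
    rw [hA] at this
    have h1 : (μ ^ n - 1) • x = 0 := by
      rw [sub_smul, one_smul, ← this]; simp
    rcases smul_eq_zero.mp h1 with h | h
    · exact sub_eq_zero.mp h
    · exact absurd h hx0
  have hres : ∀ (k : ℕ) (hm : ∀ μ : ℂ, Set.MapsTo (A ^ k) (A.eigenspace μ) (A.eigenspace μ))
      (μ : ℂ), LinearMap.trace ℂ (A.eigenspace μ) ((A ^ k).restrict (hm μ)) =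
        μ ^ k * finrank ℂ (A.eigenspace μ) := by
    intro k hm μ
    have : (A ^ k).restrict (hm μ) = (μ ^ k) • (1 : Module.End ℂ (A.eigenspace μ)) := by
      ext ⟨x, hx⟩
      simp [LinearMap.restrict_apply, LinearMap.restrict_coe_apply, pow_apply_eig A μ hx k]
      exact pow_apply_eig A μ hx k
    rw [this, map_smul, smul_eq_mul]
    congr 1
    exact LinearMap.trace_one ℂ _
  have hresA : ∀ μ : ℂ, LinearMap.trace ℂ (A.eigenspace μ) (A.restrict (hmapsA μ)) =
      μ * finrank ℂ (A.eigenspace μ) := by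
    intro μ
    have h1 := hres 1 (fun ν => by simpa using hmapsA ν) μ
    simpa using h1
  rw [htrB, htrA, map_sum]
  apply Finset.sum_congr rfl
  intro μ hμ
  rw [hres (n-1) hmapsB μ, hresA μ]
  have h1 : μ ^ n = 1 := hroot μ hμ
  have hμ0 : μ ≠ 0 := by
    intro h; rw [h, zero_pow hn.ne'] at h1; exact zero_ne_one h1
  have hq : (starRingEnd ℂ) μ * μ = 1 := by
    have h2 : ((starRingEnd ℂ) μ * μ) ^ n = 1 := by
      rw [mul_pow, ← map_pow, h1, map_one, one_mul]
    have h3 : (starRingEnd ℂ) μ * μ = ((Complex.normSq μ : ℝ) : ℂ) := by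
      rw [mul_comm]; exact Complex.mul_conj μ
    rw [h3] at h2 ⊢
    have h4 : (Complex.normSq μ) ^ n = 1 := by
      exact_mod_cast h2
    rw [real_pow_eq_one (Complex.normSq_nonneg μ) hn h4]
    norm_num
  have h5 : μ ^ (n - 1) = (starRingEnd ℂ) μ := by
    apply mul_right_cancel₀ hμ0
    rw [hq, ← pow_succ, Nat.sub_add_cancel hn]
    exact h1
  rw [h5, map_mul]
  congr 1
  simp

theorem fdRep_char_inv {G : Type} [Group G] [Fintype G] (V : FDRep ℂ G) (g : G) :
    V.character g⁻¹ = starRingEnd ℂ (V.character g) := by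
  have hn : 0 < Fintype.card G := Fintype.card_pos
  have hA : (V.ρ g) ^ Fintype.card G = 1 := by
    rw [← map_pow, pow_card_eq_one, map_one]
  have hginv : g⁻¹ = g ^ (Fintype.card G - 1) := by
    symm
    apply eq_inv_of_mul_eq_one_left
    rw [← pow_succ, Nat.sub_add_cancel hn, pow_card_eq_one]
  show LinearMap.trace ℂ V (V.ρ g⁻¹) = starRingEnd ℂ (LinearMap.trace ℂ V (V.ρ g))
  rw [hginv, map_pow]
  exact trace_pow_pred_conj (V.ρ g) hn hA

theorem char_bounds {G ι : Type} [Group G] [Fintype G] [Fintype ι] (V : ι → FDRep ℂ G)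
    (hsim : ∀ i, Simple (V i)) (hdist : ∀ i j : ι, Nonempty (V i ≅ V j) → i = j) :
    (∑ i, ((finrank ℂ (V i) : ℝ)) ^ 2 ≤ Fintype.card G) ∧
      LinearIndependent ℂ (fun i : ι => (fun g => FDRep.character (V i) g : G → ℂ)) := by
  classical
  haveI : ∀ i, Simple (V i) := hsim
  have hN0 : (0 : ℝ) < Fintype.card G := by exact_mod_cast Fintype.card_pos
  set N : ℕ := Fintype.card G with hNdef
  set s : ℝ := Real.sqrt N with hsdef
  have hs0 : 0 < s := Real.sqrt_pos.mpr hN0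
  have hss : (s : ℂ) * (s : ℂ) = (N : ℂ) := by
    rw [← Complex.ofReal_mul, Real.mul_self_sqrt (le_of_lt hN0)]
    norm_num
  have hsne : (s : ℂ) ≠ 0 := by
    simp [Complex.ofReal_eq_zero, ne_of_gt hs0]
  haveI : Invertible ((Fintype.card G : ℂ)) := invertibleOfNonzero (by
    exact_mod_cast ne_of_gt hN0)
  set w : ι → EuclideanSpace ℂ G := fun i => WithLp.toLp 2 fun g => (s : ℂ)⁻¹ * FDRep.character (V i) g
    with hwdef
  letI : Fintype ((GrpCat.of G : GrpCat) : Type) := ‹Fintype G›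
  haveI : Nonempty ((GrpCat.of G : GrpCat) : Type) := ⟨(1 : G)⟩
  haveI : Invertible ((Fintype.card ((GrpCat.of G : GrpCat) : Type)) : ℂ) :=
    invertibleOfNonzero (Nat.cast_ne_zero.mpr Fintype.card_ne_zero)
  have horth : Orthonormal ℂ w := by
    rw [orthonormal_iff_ite]
    intro i j
    have key := FDRep.char_orthonormal (k := ℂ) (G := G) (V j) (V i)
    rw [Nat.card_eq_fintype_card] at key
    have h1 : (⟪w i, w j⟫) =
        (N : ℂ)⁻¹ * ∑ g : G, FDRep.character (V j) g * FDRep.character (V i) g⁻¹ := by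
      rw [PiLp.inner_apply]
      have : ∀ g : G, ⟪w i g, w j g⟫ =
          (N : ℂ)⁻¹ * (FDRep.character (V j) g * FDRep.character (V i) g⁻¹) := by
        intro g
        rw [RCLike.inner_apply]
        rw [hwdef]
        simp only []
        rw [map_mul, map_inv₀, Complex.conj_ofReal, ← fdRep_char_inv]
        field_simp [← hss]
        rw [← hss]; ring
      rw [Finset.sum_congr rfl (fun g _ => this g), ← Finset.mul_sum]
    have key2 : (N : ℂ)⁻¹ * ∑ g : G, FDRep.character (V j) g * FDRep.character (V i) g⁻¹ =
        (if Nonempty (V j ≅ V i) then (1 : ℂ) else 0) := by exact key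
    rw [h1, key2]
    by_cases hij : i = j
    · subst hij
      simp
    · rw [if_neg hij, if_neg (fun hne => hij (hdist j i hne).symm)]
  constructor
  · have hB := horth.sum_inner_products_le (EuclideanSpace.single (1 : G) (1 : ℂ))
      (s := Finset.univ)
    have hx : ‖EuclideanSpace.single (1 : G) (1 : ℂ)‖ ^ 2 = 1 := by
      rw [EuclideanSpace.norm_single]; norm_num
    rw [hx] at hB
    have hinner : ∀ i, ‖⟪w i, EuclideanSpace.single (1 : G) (1 : ℂ)⟫‖ ^ 2 =
        ((finrank ℂ (V i) : ℝ)) ^ 2 / N := by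
      intro i
      rw [EuclideanSpace.inner_single_right]
      have : w i (1 : G) = (s : ℂ)⁻¹ * (finrank ℂ (V i) : ℂ) := by
        rw [hwdef]; simp [FDRep.char_one]
      rw [this]
      rw [map_mul, map_inv₀, Complex.conj_ofReal, map_natCast, one_mul]
      rw [norm_mul, norm_inv, Complex.norm_real, Real.norm_eq_abs, abs_of_pos hs0,
        Complex.norm_natCast]
      have hs2 : s ^ 2 = N := Real.sq_sqrt (le_of_lt hN0)
      rw [mul_pow, inv_pow, hs2]
      ring
    rw [Finset.sum_congr rfl (fun i _ => hinner i)] at hB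
    rw [← Finset.sum_div] at hB
    calc ∑ i, ((finrank ℂ (V i) : ℝ)) ^ 2 = (∑ i, ((finrank ℂ (V i) : ℝ)) ^ 2) / N * N := by
          field_simp
    _ ≤ 1 * N := by
          apply mul_le_mul_of_nonneg_right hB (le_of_lt hN0)
    _ = N := one_mul _
  · have hind := horth.linearIndependent
    have hmap := hind.map' (WithLp.linearEquiv 2 ℂ (G → ℂ)).toLinearMap
      (LinearMap.ker_eq_bot_of_injective (WithLp.linearEquiv 2 ℂ (G → ℂ)).injective)
    set u : ℂˣ := Units.mk0 (s : ℂ) hsne with hudef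
    have := hmap.units_smul (fun _ => u)
    convert this using 1
    funext i
    funext g
    show FDRep.character (V i) g = (u : ℂ) • ((WithLp.linearEquiv 2 ℂ (G → ℂ)) (w i)) g
    rw [hudef]
    show FDRep.character (V i) g = (s : ℂ) * ((s : ℂ)⁻¹ * FDRep.character (V i) g)
    field_simp
    all_goals rfl

lemma trace_mul_of_finrank_one {V : Type} [AddCommGroup V] [Module ℂ V]
    (h : finrank ℂ V = 1) (f g : Module.End ℂ V) :
    LinearMap.trace ℂ V (f * g) = LinearMap.trace ℂ V f * LinearMap.trace ℂ V g := by
  classical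
  let b : Basis (Fin 1) ℂ V := Module.basisUnique (Fin 1) h
  rw [LinearMap.trace_eq_matrix_trace ℂ b, LinearMap.trace_eq_matrix_trace ℂ b,
    LinearMap.trace_eq_matrix_trace ℂ b, LinearMap.toMatrix_mul]
  rw [Matrix.trace_fin_one, Matrix.trace_fin_one, Matrix.trace_fin_one, Matrix.mul_apply,
    Fin.sum_univ_one]

theorem card_linear_le {G ι : Type} [Group G] [Fintype G] [Fintype ι] (V : ι → FDRep ℂ G)
    (hli : LinearIndependent ℂ (fun i : ι => (fun g => FDRep.character (V i) g : G → ℂ))) :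
    Fintype.card {i : ι // finrank ℂ (V i) = 1} ≤ Nat.card (Abelianization G) := by
  classical
  have hmul : ∀ (i : {i : ι // finrank ℂ (V i) = 1}) (g h : G),
      FDRep.character (V i.1) (g * h) =
        FDRep.character (V i.1) g * FDRep.character (V i.1) h := by
    intro i g h
    show LinearMap.trace ℂ _ ((V i.1).ρ (g * h)) = _
    rw [map_mul]
    exact trace_mul_of_finrank_one i.2 _ _
  let ψ : {i : ι // finrank ℂ (V i) = 1} → (G →* ℂ) := fun i =>
    { toFun := fun g => FDRep.character (V i.1) g
      map_one' := by show FDRep.character (V i.1) 1 = 1; rw [FDRep.char_one, i.2]; norm_num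
      map_mul' := hmul i }
  let F : {i : ι // finrank ℂ (V i) = 1} → (Abelianization G →* ℂˣ) := fun i =>
    Abelianization.lift (ψ i).toHomUnits
  have hF : ∀ (i : {i : ι // finrank ℂ (V i) = 1}) (g : G),
      ((F i (Abelianization.of g)) : ℂ) = FDRep.character (V i.1) g := by
    intro i g
    show ((Abelianization.lift (ψ i).toHomUnits) (Abelianization.of g) : ℂ) = _
    rw [Abelianization.lift_apply_of]
    exact MonoidHom.coe_toHomUnits (ψ i) g
  have hli2 : LinearIndependent ℂ
      (fun i : {i : ι // finrank ℂ (V i) = 1} =>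
        (fun q => ((F i q : ℂ)) : Abelianization G → ℂ)) := by
    apply LinearIndependent.of_comp (LinearMap.funLeft ℂ ℂ Abelianization.of)
    have heq : (fun i : {i : ι // finrank ℂ (V i) = 1} =>
        (LinearMap.funLeft ℂ ℂ Abelianization.of) (fun q => ((F i q : ℂ)))) =
        fun i : {i : ι // finrank ℂ (V i) = 1} =>
          (fun g => FDRep.character (V i.1) g : G → ℂ) := by
      funext i g
      exact hF i g
    show LinearIndependent ℂ (fun i : {i : ι // finrank ℂ (V i) = 1} =>
      (LinearMap.funLeft ℂ ℂ Abelianization.of) (fun q => ((F i q : ℂ))))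
    rw [heq]
    exact hli.comp Subtype.val Subtype.val_injective
  haveI : Fintype (Abelianization G) := Fintype.ofFinite _
  have hcard := hli2.fintype_card_le_finrank
  rw [Module.finrank_pi ℂ] at hcard
  rwa [Nat.card_eq_fintype_card]

-- Component A: small commutator implies nilpotent
open scoped commutatorElement in
theorem nilpotent_of_commutator_card_le_two (G : Type) [Group G] [Finite G]
    (hc : Nat.card (commutator G) ≤ 2) : Group.IsNilpotent G := by
  classical
  have hle : commutator G ≤ Subgroup.center G := by
    intro x hx
    rw [Subgroup.mem_center_iff]
    intro g
    by_cases hx1 : x = 1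
    · simp [hx1]
    · have hy : g * x * g⁻¹ ∈ commutator G := (Subgroup.Normal.conj_mem inferInstance x hx g)
      have hy1 : g * x * g⁻¹ ≠ 1 := by
        intro hcon
        apply hx1
        have := congrArg (fun z => g⁻¹ * z * g) hcon
        simpa [mul_assoc] using this
      have heq : g * x * g⁻¹ = x := by
        by_contra hne
        have h3 : 2 < Nat.card (commutator G) := by
          haveI : Fintype (commutator G) := Fintype.ofFinite _
          rw [Nat.card_eq_fintype_card]
          rw [Fintype.two_lt_card_iff]
          refine ⟨⟨1, (commutator G).one_mem⟩, ⟨x, hx⟩, ⟨g * x * g⁻¹, hy⟩, ?_, ?_, ?_⟩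
          · exact fun h => hx1 (congrArg Subtype.val h).symm
          · exact fun h => hy1 (congrArg Subtype.val h).symm
          · exact fun h => hne (congrArg Subtype.val h).symm
        omega
      calc g * x = (g * x * g⁻¹) * g := by group
      _ = x * g := by rw [heq]
  -- quotient by center is abelian
  have hcomm : ∀ a b : G ⧸ Subgroup.center G, a * b = b * a := by
    intro a b
    induction a using QuotientGroup.induction_on with
    | H x =>
      induction b using QuotientGroup.induction_on with
      | H y =>
        rw [← QuotientGroup.mk_mul, ← QuotientGroup.mk_mul, QuotientGroup.eq]
        have h2 : (x * y)⁻¹ * (y * x) = ⁅y⁻¹, x⁻¹⁆ := by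
          simp [commutatorElement_def]; group
        rw [h2]
        exact hle (Subgroup.commutator_mem_commutator (Subgroup.mem_top _) (Subgroup.mem_top _))
  letI : CommGroup (G ⧸ Subgroup.center G) :=
    { (inferInstance : Group (G ⧸ Subgroup.center G)) with mul_comm := hcomm }
  exact of_quotient_center_nilpotent inferInstance

lemma finrank_pos_of_simple {G : Type} [Group G] (X : FDRep ℂ G) (hX : Simple X) :
    0 < finrank ℂ X := by
  by_contra hcon
  push_neg at hcon
  have h0 : finrank ℂ X = 0 := Nat.le_zero.mp hcon
  haveI : Subsingleton (X : Type) := Module.finrank_zero_iff.mp h0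
  have hid : 𝟙 X = 0 := by
    apply Action.Hom.ext
    ext (x : (X : Type))
    exact @Subsingleton.elim _ ‹Subsingleton (X : Type)› _ _
  haveI := hX
  exact CategoryTheory.id_nonzero X hid

end Aux

/-- **Theorem (genus-h nilpotency criterion).**
If `q_h(G) > q_h(S_3) = (1/3)(1 + 1/2^(2h-1))`, then `G` is nilpotent.
Here `q_h(G) = (1/|G|) * Σ_{χ ∈ Irr(G)} (1/χ(1))^(2h-2)`; the irreducible complex
characters of `G` are encoded by a complete family `V : ι → FDRep ℂ G` of pairwise
non-isomorphic simple representations, with `χ(1) = finrank ℂ (V i)`. -/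
theorem qh_gt_S3_imp_nilpotent (G : Type) [Group G] [Fintype G] (h : ℕ) (hh : 1 ≤ h)
    (ι : Type) [Fintype ι] (V : ι → FDRep ℂ G)
    (hsim : ∀ i, Simple (V i))
    (hdist : ∀ i j : ι, Nonempty (V i ≅ V j) → i = j)
    (hcomp : ∀ W : FDRep ℂ G, Simple W → ∃ i, Nonempty (W ≅ V i))
    (hq : (Nat.card G : ℝ)⁻¹ * ∑ i, ((finrank ℂ (V i) : ℝ))⁻¹ ^ (2 * h - 2)
          > (1 / 3) * (1 + 1 / 2 ^ (2 * h - 1))) :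
    Group.IsNilpotent G := by
  classical
  by_contra hnil
  have hc3 : 3 ≤ Nat.card (commutator G) := by
    by_contra hlt
    push_neg at hlt
    exact hnil (nilpotent_of_commutator_card_le_two G (by omega))
  obtain ⟨hsq, hli⟩ := char_bounds V hsim hdist
  have hpos : ∀ i, 0 < finrank ℂ (V i) := fun i => finrank_pos_of_simple (V i) (hsim i)
  have ha := card_linear_le V hli
  have hNcard : Nat.card G = Fintype.card G := Nat.card_eq_fintype_card
  set N : ℕ := Fintype.card G with hN
  have hN0 : (0 : ℝ) < N := by exact_mod_cast Fintype.card_pos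
  set A : Finset ι := Finset.univ.filter (fun i => finrank ℂ (V i) = 1) with hA
  set B : Finset ι := Finset.univ.filter (fun i => ¬ finrank ℂ (V i) = 1) with hB
  have haA : Fintype.card {i : ι // finrank ℂ (V i) = 1} = A.card := Fintype.card_subtype _
  have hprod : Nat.card G = Nat.card (G ⧸ commutator G) * Nat.card (commutator G) :=
    Subgroup.card_eq_card_quotient_mul_card_subgroup _
  have habel : Nat.card (Abelianization G) = Nat.card (G ⧸ commutator G) := rfl
  have h3a : 3 * A.card ≤ N := by
    have h1 : A.card ≤ Nat.card (G ⧸ commutator G) := by rw [← habel, ← haA]; exact ha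
    calc 3 * A.card ≤ Nat.card (commutator G) * Nat.card (G ⧸ commutator G) :=
          Nat.mul_le_mul hc3 h1
    _ = Nat.card G := by rw [mul_comm]; exact hprod.symm
    _ = N := hNcard
  have hd2 : ∀ i ∈ B, (2 : ℝ) ≤ (finrank ℂ (V i) : ℝ) := by
    intro i hi
    rw [hB, Finset.mem_filter] at hi
    have h1 := hpos i
    have h2 : 2 ≤ finrank ℂ (V i) := by omega
    exact_mod_cast h2
  have hsq2 : (A.card : ℝ) + 4 * B.card ≤ N := by
    have hsplit : ∑ i, ((finrank ℂ (V i) : ℝ)) ^ 2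
        = ∑ i ∈ A, ((finrank ℂ (V i) : ℝ)) ^ 2 + ∑ i ∈ B, ((finrank ℂ (V i) : ℝ)) ^ 2 :=
      (Finset.sum_filter_add_sum_filter_not _ _ _).symm
    have hAsum : ∑ i ∈ A, ((finrank ℂ (V i) : ℝ)) ^ 2 = A.card := by
      rw [Finset.sum_congr rfl (fun i hi => ?_), Finset.sum_const, nsmul_eq_mul, mul_one]
      rw [hA, Finset.mem_filter] at hi
      rw [hi.2]
      norm_num
    have hBsum : (4 : ℝ) * B.card ≤ ∑ i ∈ B, ((finrank ℂ (V i) : ℝ)) ^ 2 := by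
      rw [mul_comm]
      calc (B.card : ℝ) * 4 = ∑ _i ∈ B, (4 : ℝ) := by rw [Finset.sum_const, nsmul_eq_mul]
      _ ≤ _ := Finset.sum_le_sum (fun i hi => by nlinarith [hd2 i hi])
    rw [hsplit, hAsum] at hsq
    linarith
  set t : ℕ := 2 * h - 2 with htdef
  set x : ℝ := (1/2 : ℝ) ^ t with hxdef
  have hx0 : 0 < x := by positivity
  have hx1 : x ≤ 1 := by rw [hxdef]; exact pow_le_one₀ (by norm_num) (by norm_num)
  have hsum : ∑ i, ((finrank ℂ (V i) : ℝ))⁻¹ ^ t ≤ A.card + B.card * x := by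
    have hsplit : ∑ i, ((finrank ℂ (V i) : ℝ))⁻¹ ^ t
        = ∑ i ∈ A, ((finrank ℂ (V i) : ℝ))⁻¹ ^ t + ∑ i ∈ B, ((finrank ℂ (V i) : ℝ))⁻¹ ^ t :=
      (Finset.sum_filter_add_sum_filter_not _ _ _).symm
    have hAsum : ∑ i ∈ A, ((finrank ℂ (V i) : ℝ))⁻¹ ^ t = A.card := by
      rw [Finset.sum_congr rfl (fun i hi => ?_), Finset.sum_const, nsmul_eq_mul, mul_one]
      rw [hA, Finset.mem_filter] at hi
      rw [hi.2]
      norm_num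
    have hBsum : ∑ i ∈ B, ((finrank ℂ (V i) : ℝ))⁻¹ ^ t ≤ B.card * x := by
      calc ∑ i ∈ B, ((finrank ℂ (V i) : ℝ))⁻¹ ^ t ≤ ∑ _i ∈ B, x := by
            apply Finset.sum_le_sum
            intro i hi
            rw [hxdef]
            apply pow_le_pow_left₀ (by positivity)
            rw [one_div]
            exact inv_anti₀ (by norm_num) (hd2 i hi)
      _ = B.card * x := by rw [Finset.sum_const, nsmul_eq_mul]
    rw [hsplit, hAsum]
    linarith
  have hhalf : (1 : ℝ) / 2 ^ (2 * h - 1) = x / 2 := by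
    have h21 : 2 * h - 1 = t + 1 := by omega
    rw [h21, hxdef, pow_succ, div_pow, one_pow]
    field_simp
  have hq' : (1/3 : ℝ) * (1 + x / 2) < (N : ℝ)⁻¹ * (A.card + B.card * x) := by
    calc (1/3 : ℝ) * (1 + x / 2) = (1/3) * (1 + 1 / 2 ^ (2 * h - 1)) := by rw [hhalf]
    _ < (Nat.card G : ℝ)⁻¹ * ∑ i, ((finrank ℂ (V i) : ℝ))⁻¹ ^ t := hq
    _ = (N : ℝ)⁻¹ * ∑ i, ((finrank ℂ (V i) : ℝ))⁻¹ ^ t := by rw [hNcard]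
    _ ≤ (N : ℝ)⁻¹ * (A.card + B.card * x) := by
        exact mul_le_mul_of_nonneg_left hsum (by positivity)
  have h3a' : 3 * (A.card : ℝ) ≤ N := by exact_mod_cast h3a
  have hb0 : (0 : ℝ) ≤ B.card := by positivity
  have h5 := mul_lt_mul_of_pos_left hq' hN0
  have h6 : (N : ℝ) * ((N : ℝ)⁻¹ * ((A.card : ℝ) + B.card * x)) = (A.card : ℝ) + B.card * x := by
    field_simp
  nlinarith [h5, h6, mul_nonneg (by linarith : (0:ℝ) ≤ 4 - x)
      (by linarith : (0:ℝ) ≤ (N : ℝ) - 3 * A.card),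
    mul_nonneg (le_of_lt hx0)
      (by linarith : (0:ℝ) ≤ (N : ℝ) - A.card - 4 * B.card)]
end

section
/- Let G be a finite group and let h be a positive integer. If q̃_h(G) > q̃_h(D_8) = (1/4)(1 + 3/2^h), then G is abelian. (Here D_8 denotes the dihedral group of order 8, whose conjugacy class sizes are 1, 1, 2, 2, 2.) -/
/-- If a finite group is nonabelian, its center has index at least 4. -/
lemma four_mul_card_center_le (G : Type) [Group G] [Fintype G]
    (hna : ¬ ∀ a b : G, a * b = b * a) :
    4 * Nat.card (Subgroup.center G) ≤ Nat.card G := by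
  rw [Subgroup.card_eq_card_quotient_mul_card_subgroup (Subgroup.center G)]
  have hcyc : ¬ IsCyclic (G ⧸ Subgroup.center G) := by
    intro hc
    exact hna (fun a b => commutative_of_cyclic_center_quotient
      (QuotientGroup.mk' (Subgroup.center G)) (by rw [QuotientGroup.ker_mk']) a b)
  have hpos : 0 < Nat.card (G ⧸ Subgroup.center G) := Nat.card_pos
  by_contra hlt
  push_neg at hlt
  have hZpos : 0 < Nat.card (Subgroup.center G) := Nat.card_pos
  have h4 : Nat.card (G ⧸ Subgroup.center G) < 4 := by
    by_contra hge
    push_neg at hge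
    nlinarith [Nat.mul_le_mul hge (le_refl (Nat.card (Subgroup.center G)))]
  interval_cases hcard : Nat.card (G ⧸ Subgroup.center G)
  · exact hcyc (by
      have : Subsingleton (G ⧸ Subgroup.center G) := Nat.card_eq_one_iff_unique.mp hcard |>.1
      infer_instance)
  · exact hcyc (isCyclic_of_prime_card (p := 2) hcard)
  · exact hcyc (isCyclic_of_prime_card (p := 3) hcard)

/-- **Theorem (dual genus-h abelian criterion).**
If `q̃_h(G) > q̃_h(D_8) = (1/4)(1 + 3/2^h)`, then `G` is abelian.
Here `q̃_h(G) = (1/|G|) * Σ_{C ∈ Cl(G)} (1/|C|)^(h-1)`, the sum running over the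
conjugacy classes of `G`. -/
theorem qth_gt_D8_imp_abelian (G : Type) [Group G] [Fintype G] (h : ℕ) (hh : 1 ≤ h)
    (hq : (Nat.card G : ℝ)⁻¹ * ∑ᶠ c : ConjClasses G, ((Nat.card c.carrier : ℝ))⁻¹ ^ (h - 1)
          > (1 / 4) * (1 + 3 / 2 ^ h)) :
    ∀ a b : G, a * b = b * a := by
  classical
  by_contra hna
  have hZ4 : 4 * Nat.card (Subgroup.center G) ≤ Nat.card G :=
    four_mul_card_center_le G hna
  set n := Nat.card G with hn
  set Z := Nat.card (Subgroup.center G) with hZ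
  have hnpos : 0 < n := Nat.card_pos
  have hZpos : 0 < Z := Nat.card_pos
  -- Fintype for conjugacy classes
  have : Fintype (ConjClasses G) := Fintype.ofFinite _
  -- every class carrier is nonempty and finite
  have hpos : ∀ c : ConjClasses G, 0 < Nat.card c.carrier := by
    intro c
    obtain ⟨g, rfl⟩ := c.exists_rep
    have : Nonempty ((ConjClasses.mk g).carrier) := ⟨⟨g, ConjClasses.mem_carrier_mk⟩⟩
    exact Nat.card_pos
  set S : Finset (ConjClasses G) := (ConjClasses.noncenter G).toFinset with hS
  -- singleton classes: card = 1
  have hone : ∀ c : ConjClasses G, c ∉ S → Nat.card c.carrier = 1 := by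
    intro c hc
    simp only [hS, Set.mem_toFinset, ConjClasses.mem_noncenter, not_not] at hc
    obtain ⟨g, rfl⟩ := c.exists_rep
    rw [Set.not_nontrivial_iff] at hc
    have := hc.eq_singleton_of_mem (ConjClasses.mem_carrier_mk (a := g))
    rw [this]
    simp
  -- noncenter classes: card ≥ 2
  have htwo : ∀ c : ConjClasses G, c ∈ S → 2 ≤ Nat.card c.carrier := by
    intro c hc
    simp only [hS, Set.mem_toFinset, ConjClasses.mem_noncenter] at hc
    rw [Nat.card_coe_set_eq]
    exact (Set.one_lt_ncard (Set.toFinite _)).mpr hc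
  -- number of central classes is Z
  have hcount : (Finset.univ \ S).card = Z := by
    have h1 : Fintype.card (Subgroup.center G)
        = Fintype.card ((ConjClasses.noncenter G)ᶜ : Set (ConjClasses G)) :=
      Fintype.card_congr ((ConjClasses.mk_bijOn G).equiv _)
    have h2 : ((ConjClasses.noncenter G)ᶜ : Set (ConjClasses G)).toFinset
        = Finset.univ \ S := by
      rw [Set.toFinset_compl, Finset.compl_eq_univ_sdiff]
    rw [← h2, Set.toFinset_card, ← h1, hZ, Nat.card_eq_fintype_card]
  -- class equation
  have hclass : Z + ∑ c ∈ S, Nat.card c.carrier = n := by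
    have := Group.nat_card_center_add_sum_card_noncenter_eq_card G
    rwa [← Set.coe_toFinset (ConjClasses.noncenter G), finsum_mem_coe_finset] at this
  -- rewrite the finsum as a finset sum
  rw [finsum_eq_sum_of_fintype] at hq
  -- bound the sum
  set u : ℝ := (2 : ℝ)⁻¹ ^ h with hu
  have hu0 : 0 < u := by positivity
  have hu1 : u ≤ 2⁻¹ := by
    calc u ≤ (2:ℝ)⁻¹ ^ 1 := pow_le_pow_of_le_one (by norm_num) (by norm_num) hh
    _ = 2⁻¹ := pow_one _
  have hsum : ∑ c : ConjClasses G, ((Nat.card c.carrier : ℝ))⁻¹ ^ (h - 1)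
      ≤ (Z : ℝ) + ((n : ℝ) - Z) * u := by
    rw [← Finset.sum_sdiff S.subset_univ]
    have hA : ∑ c ∈ Finset.univ \ S, ((Nat.card c.carrier : ℝ))⁻¹ ^ (h - 1) = (Z : ℝ) := by
      have heq : ∀ c ∈ Finset.univ \ S, ((Nat.card c.carrier : ℝ))⁻¹ ^ (h - 1) = 1 := by
        intro c hc
        rw [hone c (Finset.mem_sdiff.mp hc).2]
        norm_num
      rw [Finset.sum_congr rfl heq, Finset.sum_const, hcount]
      simp
    have hB : ∑ c ∈ S, ((Nat.card c.carrier : ℝ))⁻¹ ^ (h - 1)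
        ≤ ((n : ℝ) - Z) * u := by
      have hcast : ∑ c ∈ S, (Nat.card c.carrier : ℝ) = ((n : ℝ) - Z) := by
        have h' : (Z : ℝ) + ∑ c ∈ S, (Nat.card c.carrier : ℝ) = n := by
          exact_mod_cast hclass
        linarith
      rw [← hcast, Finset.sum_mul]
      apply Finset.sum_le_sum
      intro c hc
      have hm2 : (2 : ℝ) ≤ (Nat.card c.carrier : ℝ) := by exact_mod_cast htwo c hc
      have hm0 : (0 : ℝ) < (Nat.card c.carrier : ℝ) := by linarith
      set m : ℝ := (Nat.card c.carrier : ℝ)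
      have hkey : m⁻¹ ^ (h - 1) = m * m⁻¹ ^ h := by
        conv_rhs => rw [show h = (h - 1) + 1 by omega]
        rw [pow_succ]
        field_simp
      rw [hkey]
      apply mul_le_mul_of_nonneg_left _ (le_of_lt hm0)
      rw [hu]
      apply pow_le_pow_left₀ (by positivity)
      rw [inv_le_inv₀ hm0 (by norm_num)]
      exact hm2
    linarith
  -- final algebra
  have hrhs : (1 / 4 : ℝ) * (1 + 3 / 2 ^ h) = 1 / 4 + 3 / 4 * u := by
    rw [hu, inv_pow]
    field_simp
  have hZn : (4 : ℝ) * Z ≤ n := by exact_mod_cast hZ4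
  have hn1 : (1 : ℝ) ≤ n := by exact_mod_cast hnpos
  have hfinal : (n : ℝ)⁻¹ * ((Z : ℝ) + ((n : ℝ) - Z) * u) ≤ 1 / 4 + 3 / 4 * u := by
    rw [inv_mul_le_iff₀ (by linarith)]
    nlinarith
  rw [hrhs] at hq
  have hq2 : (n : ℝ)⁻¹ * ∑ c : ConjClasses G, ((Nat.card c.carrier : ℝ))⁻¹ ^ (h - 1)
      ≤ 1 / 4 + 3 / 4 * u :=
    le_trans (mul_le_mul_of_nonneg_left hsum (by positivity)) hfinal
  linarith
end

section
/- Let G be a finite group and let h be a positive integer. If q̃_h(G) > q̃_h(S_3) = (1/6)(1 + 1/2^{h-1} + 1/3^{h-1}), then G is nilpotent. (Here S_3 denotes the symmetric group of degree 3, whose conjugacy class sizes are 1, 2, 3.) -/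
open Finset

set_option linter.unusedSectionVars false
set_option maxHeartbeats 1000000

section Aux

variable {G : Type*} [Group G] [Fintype G]

lemma carrier_nonempty' (c : ConjClasses G) : c.carrier.Nonempty := by
  obtain ⟨a, rfl⟩ := c.exists_rep
  exact ⟨a, ConjClasses.mem_carrier_mk⟩

lemma one_le_card_carrier (c : ConjClasses G) : 1 ≤ Nat.card c.carrier := by
  haveI : Nonempty c.carrier := (carrier_nonempty' c).to_subtype
  exact Nat.card_pos

lemma sum_card_carrier_real [Fintype (ConjClasses G)] :
    ∑ c : ConjClasses G, (Nat.card c.carrier : ℝ) = (Nat.card G : ℝ) := by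
  have h := Group.sum_card_conj_classes_eq_card G
  rw [finsum_eq_sum_of_fintype] at h
  rw [← h]
  push_cast
  refine Finset.sum_congr rfl fun c _ => ?_
  rw [Nat.card_coe_set_eq]

lemma sum_card_carrier_nat [Fintype (ConjClasses G)] :
    ∑ c : ConjClasses G, Nat.card c.carrier = Nat.card G := by
  have h := Group.sum_card_conj_classes_eq_card G
  rw [finsum_eq_sum_of_fintype] at h
  rw [← h]
  refine Finset.sum_congr rfl fun c _ => ?_
  rw [Nat.card_coe_set_eq]

lemma carrier_one_eq : ((1 : ConjClasses G)).carrier = ({1} : Set G) := by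
  ext x
  simp [ConjClasses.mem_carrier_iff_mk_eq, ConjClasses.one_eq_mk_one,
    ConjClasses.mk_eq_mk_iff_isConj, isConj_one_left]

lemma card_carrier_one : Nat.card ((1 : ConjClasses G)).carrier = 1 := by
  rw [Nat.card_coe_set_eq, carrier_one_eq, Set.ncard_singleton]

lemma card_carrier_dvd (c : ConjClasses G) : Nat.card c.carrier ∣ Nat.card G := by
  classical
  obtain ⟨g, rfl⟩ := c.exists_rep
  rw [← ConjAct.orbit_eq_carrier_conjClasses]
  haveI : Fintype (MulAction.orbit (ConjAct G) g) := Fintype.ofFinite _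
  haveI : Fintype (MulAction.stabilizer (ConjAct G) g) := Fintype.ofFinite _
  have h := MulAction.card_orbit_mul_card_stabilizer_eq_card_group (ConjAct G) g
  rw [ConjAct.card] at h
  rw [Nat.card_eq_fintype_card, Nat.card_eq_fintype_card, ← h]
  exact Dvd.intro _ rfl

lemma inv_pow_le_aux (k : ℕ) (r : ℝ) (hr : 0 < r) (hk : r ≤ (k : ℝ)) (m : ℕ) :
    ((k : ℝ))⁻¹ ^ m ≤ (k : ℝ) * (r⁻¹) ^ (m + 1) := by
  have hk0 : (0:ℝ) < k := lt_of_lt_of_le hr hk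
  have h1 : ((k:ℝ))⁻¹ ≤ r⁻¹ := inv_anti₀ hr hk
  have h2 : ((k:ℝ))⁻¹ ^ (m+1) ≤ (r⁻¹) ^ (m+1) :=
    pow_le_pow_left₀ (by positivity) h1 _
  have h3 : (k:ℝ) * ((k:ℝ))⁻¹ ^ (m+1) = ((k:ℝ))⁻¹ ^ m := by
    rw [pow_succ, mul_comm (((k:ℝ))⁻¹ ^ m) _, ← mul_assoc, mul_inv_cancel₀ hk0.ne', one_mul]
  calc ((k:ℝ))⁻¹ ^ m = (k:ℝ) * ((k:ℝ))⁻¹ ^ (m+1) := h3.symm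
    _ ≤ (k:ℝ) * (r⁻¹) ^ (m+1) := mul_le_mul_of_nonneg_left h2 hk0.le

lemma key_real_ineq (m : ℕ) : 2 * ((2:ℝ))⁻¹ ^ m ≤ 1 + ((3:ℝ))⁻¹ ^ m := by
  cases m with
  | zero => norm_num
  | succ m =>
    have h1 : ((2:ℝ))⁻¹ ^ (m+1) ≤ ((2:ℝ))⁻¹ ^ 1 :=
      pow_le_pow_of_le_one (by norm_num) (by norm_num) (by omega)
    have h2 : (0:ℝ) ≤ ((3:ℝ))⁻¹ ^ (m+1) := by positivity
    norm_num at h1 ⊢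
    nlinarith

lemma nilpotent_of_card_le_five (h5 : Nat.card G ≤ 5) : Group.IsNilpotent G := by
  have h0 : 0 < Nat.card G := Nat.card_pos
  have hp : ∀ (p k : ℕ), p.Prime → Nat.card G = p ^ k → Group.IsNilpotent G := by
    intro p k hp hcard
    haveI : Fact p.Prime := ⟨hp⟩
    exact (IsPGroup.of_card hcard).isNilpotent
  interval_cases h : Nat.card G
  · exact hp 2 0 Nat.prime_two (by norm_num [h])
  · exact hp 2 1 Nat.prime_two (by norm_num [h])
  · exact hp 3 1 Nat.prime_three (by norm_num [h])
  · exact hp 2 2 Nat.prime_two (by norm_num [h])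
  · exact hp 5 1 (by norm_num) (by norm_num [h])

lemma carrier_map_surj {H : Type*} [Group H] (π : G →* H) (hs : Function.Surjective π)
    (C : ConjClasses G) : (ConjClasses.map π C).carrier = π '' C.carrier := by
  obtain ⟨x, rfl⟩ := C.exists_rep
  have hmap : ConjClasses.map π (ConjClasses.mk x) = ConjClasses.mk (π x) := rfl
  rw [hmap]
  ext y
  simp only [ConjClasses.mem_carrier_iff_mk_eq, Set.mem_image,
    ConjClasses.mk_eq_mk_iff_isConj]
  constructor
  · intro h
    obtain ⟨c, hc⟩ := isConj_iff.mp h.symm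
    obtain ⟨w, rfl⟩ := hs c
    refine ⟨w * x * w⁻¹, isConj_iff.mpr ⟨w⁻¹, by group⟩, ?_⟩
    rw [← hc]
    simp [mul_assoc]
  · rintro ⟨g, hg, rfl⟩
    exact π.map_isConj hg

end Aux

section Centerless

lemma centerless_bound (m : ℕ) (G : Type*) [Group G] [Fintype G]
    (hZ : Subgroup.center G = ⊥) (hnil : ¬ Group.IsNilpotent G) :
    ∑ᶠ c : ConjClasses G, ((Nat.card c.carrier : ℝ))⁻¹ ^ m ≤
      (Nat.card G : ℝ) * ((1/6) * (1 + ((2:ℝ))⁻¹ ^ m + ((3:ℝ))⁻¹ ^ m)) := by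
  classical
  haveI : Fintype (ConjClasses G) := Fintype.ofFinite _
  rw [finsum_eq_sum_of_fintype]
  set f : ConjClasses G → ℝ := fun c => ((Nat.card c.carrier : ℝ))⁻¹ ^ m with hf
  have hn6 : 6 ≤ Nat.card G := by
    by_contra hlt
    exact hnil (nilpotent_of_card_le_five (by omega))
  -- every nontrivial class has size ≥ 2
  have h2 : ∀ c : ConjClasses G, c ≠ 1 → 2 ≤ Nat.card c.carrier := by
    intro c hc
    by_contra hcard
    push_neg at hcard
    apply hc
    have hsub : ¬ c.carrier.Nontrivial := by
      intro hnt
      rw [← Set.nontrivial_coe_sort] at hnt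
      have := Finite.one_lt_card_iff_nontrivial.mpr hnt
      omega
    have hmem : c ∈ (ConjClasses.noncenter G)ᶜ := by
      simpa [ConjClasses.mem_noncenter] using hsub
    obtain ⟨g, hg, rfl⟩ := (ConjClasses.mk_bijOn G).surjOn hmem
    have hg1 : g = 1 := by
      rw [hZ] at hg
      simpa using hg
    rw [hg1, ← ConjClasses.one_eq_mk_one]
  -- some class has size ≥ 3
  have h3 : ∃ c0 : ConjClasses G, 3 ≤ Nat.card c0.carrier := by
    by_contra hno
    push_neg at hno
    have hceq := sum_card_carrier_nat (G := G)
    -- n is odd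
    have hodd : Nat.card G =
        1 + 2 * (Finset.univ.erase (1 : ConjClasses G)).card := by
      rw [← hceq, ← Finset.add_sum_erase _ _ (Finset.mem_univ (1 : ConjClasses G)),
        card_carrier_one]
      congr 1
      rw [Finset.card_eq_sum_ones, Finset.mul_sum]
      refine Finset.sum_congr rfl fun c hcmem => ?_
      have hc1 : c ≠ 1 := (Finset.mem_erase.mp hcmem).1
      have := h2 c hc1
      have := hno c
      omega
    -- there is a class of size exactly 2, and it divides |G|
    haveI : Nontrivial G := by
      have : 1 < Nat.card G := by omega
      exact Finite.one_lt_card_iff_nontrivial.mp this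
    obtain ⟨g, hg⟩ := exists_ne (1 : G)
    have hgne : ConjClasses.mk g ≠ 1 := by
      intro h
      apply hg
      have : g ∈ ((1 : ConjClasses G)).carrier := by
        rw [← h]; exact ConjClasses.mem_carrier_mk
      rwa [carrier_one_eq, Set.mem_singleton_iff] at this
    have hdvd := card_carrier_dvd (ConjClasses.mk g)
    have hcg : Nat.card (ConjClasses.mk g).carrier = 2 := by
      have := h2 _ hgne
      have := hno (ConjClasses.mk g)
      omega
    rw [hcg] at hdvd
    omega
  obtain ⟨c0, hc0⟩ := h3
  have hc0ne : c0 ≠ 1 := by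
    intro h
    rw [h, card_carrier_one] at hc0
    omega
  set A := (Finset.univ.erase (1 : ConjClasses G)).erase c0 with hA
  have hc0mem : c0 ∈ Finset.univ.erase (1 : ConjClasses G) :=
    Finset.mem_erase.mpr ⟨hc0ne, Finset.mem_univ c0⟩
  have hsplit : ∑ c : ConjClasses G, f c = f 1 + (f c0 + ∑ c ∈ A, f c) := by
    rw [Finset.add_sum_erase _ f hc0mem, Finset.add_sum_erase _ f (Finset.mem_univ 1)]
  have hsplitc : (Nat.card G : ℝ) =
      1 + ((Nat.card c0.carrier : ℝ) + ∑ c ∈ A, (Nat.card c.carrier : ℝ)) := by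
    rw [← sum_card_carrier_real (G := G),
      ← Finset.add_sum_erase _ _ (Finset.mem_univ (1 : ConjClasses G)),
      ← Finset.add_sum_erase _ _ hc0mem, card_carrier_one]
    norm_num
    rfl
  have hf1 : f 1 = 1 := by
    show ((Nat.card ((1 : ConjClasses G)).carrier : ℝ))⁻¹ ^ m = 1
    rw [card_carrier_one]
    norm_num
  -- bounds
  have hb0 : f c0 ≤ (Nat.card c0.carrier : ℝ) * ((3:ℝ)⁻¹) ^ (m + 1) :=
    inv_pow_le_aux _ 3 (by norm_num) (by exact_mod_cast hc0) m
  have hbA : ∀ c ∈ A, f c ≤ (Nat.card c.carrier : ℝ) * ((2:ℝ)⁻¹) ^ (m + 1) := by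
    intro c hcmem
    have hc1 : c ≠ 1 := (Finset.mem_erase.mp (Finset.mem_erase.mp hcmem).2).1
    exact inv_pow_le_aux _ 2 (by norm_num) (by exact_mod_cast h2 c hc1) m
  have hsumA : ∑ c ∈ A, f c ≤
      (∑ c ∈ A, (Nat.card c.carrier : ℝ)) * ((2:ℝ)⁻¹) ^ (m + 1) := by
    rw [Finset.sum_mul]
    exact Finset.sum_le_sum hbA
  -- final arithmetic
  have hkey := key_real_ineq m
  have h32 : ((3:ℝ)⁻¹) ^ (m+1) ≤ ((2:ℝ)⁻¹) ^ (m+1) :=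
    pow_le_pow_left₀ (by norm_num) (by norm_num) _
  have h32' : ((3:ℝ))⁻¹ ^ m * 3⁻¹ ≤ ((2:ℝ))⁻¹ ^ m * 2⁻¹ := by
    rw [← pow_succ, ← pow_succ]; exact h32
  have hb0' : f c0 ≤ (Nat.card c0.carrier : ℝ) * (((3:ℝ))⁻¹ ^ m * 3⁻¹) := by
    rw [← pow_succ]; exact hb0
  have hsumA' : ∑ c ∈ A, f c ≤
      (∑ c ∈ A, (Nat.card c.carrier : ℝ)) * (((2:ℝ))⁻¹ ^ m * 2⁻¹) := by
    rw [← pow_succ]; exact hsumA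
  have hc0r : (3:ℝ) ≤ (Nat.card c0.carrier : ℝ) := by exact_mod_cast hc0
  have hnr : (6:ℝ) ≤ (Nat.card G : ℝ) := by exact_mod_cast hn6
  have hx0 : (0:ℝ) ≤ ((2:ℝ))⁻¹ ^ m := by positivity
  have hy0 : (0:ℝ) ≤ ((3:ℝ))⁻¹ ^ m := by positivity
  have hSA : ∑ c ∈ A, (Nat.card c.carrier : ℝ) =
      (Nat.card G : ℝ) - 1 - (Nat.card c0.carrier : ℝ) := by
    rw [hsplitc]; ring
  rw [hsplit, hf1]
  rw [hSA] at hsumA'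
  nlinarith [mul_nonneg (by linarith : (0:ℝ) ≤ (Nat.card G : ℝ) - 6)
      (by linarith : (0:ℝ) ≤ 1 + ((3:ℝ))⁻¹ ^ m - 2 * ((2:ℝ))⁻¹ ^ m),
    mul_nonneg (by linarith : (0:ℝ) ≤ (Nat.card c0.carrier : ℝ) - 3)
      (by linarith : (0:ℝ) ≤ ((2:ℝ))⁻¹ ^ m * 2⁻¹ - ((3:ℝ))⁻¹ ^ m * 3⁻¹)]

end Centerless

section Main

lemma main_bound (m : ℕ) : ∀ (n : ℕ) (G : Type) [Group G] [Fintype G], Nat.card G = n →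
    ¬ Group.IsNilpotent G →
    ∑ᶠ c : ConjClasses G, ((Nat.card c.carrier : ℝ))⁻¹ ^ m ≤
      (Nat.card G : ℝ) * ((1/6) * (1 + ((2:ℝ))⁻¹ ^ m + ((3:ℝ))⁻¹ ^ m)) := by
  intro n
  induction n using Nat.strong_induction_on with
  | _ n ih =>
    intro G _ _ hn hnil
    by_cases hZ : Subgroup.center G = ⊥
    · exact centerless_bound m G hZ hnil
    · classical
      set Z := Subgroup.center G with hZdef
      haveI hZnt : Nontrivial Z := (Subgroup.nontrivial_iff_ne_bot Z).mpr hZ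
      have hz2 : 2 ≤ Nat.card Z := Finite.one_lt_card
      haveI : Fintype (G ⧸ Z) := Fintype.ofFinite _
      have hcard : Nat.card G = Nat.card (G ⧸ Z) * Nat.card Z :=
        Subgroup.card_eq_card_quotient_mul_card_subgroup Z
      have hQpos : 0 < Nat.card (G ⧸ Z) := Nat.card_pos
      have hQlt : Nat.card (G ⧸ Z) < n := by
        rw [← hn, hcard]
        nlinarith
      have hQnil : ¬ Group.IsNilpotent (G ⧸ Z) := fun h =>
        hnil (of_quotient_center_nilpotent h)
      have IH := ih (Nat.card (G ⧸ Z)) hQlt (G ⧸ Z) rfl hQnil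
      haveI : Fintype (ConjClasses G) := Fintype.ofFinite _
      haveI : Fintype (ConjClasses (G ⧸ Z)) := Fintype.ofFinite _
      rw [finsum_eq_sum_of_fintype] at IH ⊢
      set π : G →* G ⧸ Z := QuotientGroup.mk' Z with hπdef
      have hπ : Function.Surjective π := QuotientGroup.mk'_surjective Z
      set φ : ConjClasses G → ConjClasses (G ⧸ Z) := ConjClasses.map π with hφdef
      set f : ConjClasses G → ℝ := fun c => ((Nat.card c.carrier : ℝ))⁻¹ ^ m with hfdef
      set fQ : ConjClasses (G ⧸ Z) → ℝ := fun D => ((Nat.card D.carrier : ℝ))⁻¹ ^ m with hfQdef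
      -- fiberwise bound
      have hfib : ∀ D : ConjClasses (G ⧸ Z),
          ∑ C ∈ Finset.univ.filter (fun C => φ C = D), f C ≤ (Nat.card Z : ℝ) * fQ D := by
        intro D
        set T := Finset.univ.filter (fun C => φ C = D) with hT
        have hDpos : 1 ≤ Nat.card D.carrier := one_le_card_carrier D
        have hkey : ∀ C ∈ T, Nat.card D.carrier ≤ Nat.card C.carrier := by
          intro C hC
          have hCD : φ C = D := (Finset.mem_filter.mp hC).2
          rw [← hCD, hφdef, carrier_map_surj π hπ C]
          exact Nat.card_image_le (Set.toFinite _)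
        have hfle : ∀ C ∈ T, f C ≤ fQ D := by
          intro C hC
          have h1 : ((Nat.card C.carrier : ℝ))⁻¹ ≤ ((Nat.card D.carrier : ℝ))⁻¹ := by
            apply inv_anti₀
            · exact_mod_cast hDpos
            · exact_mod_cast hkey C hC
          exact pow_le_pow_left₀ (by positivity) h1 m
        -- cardinality of the fiber
        have hsum_le : ∑ C ∈ T, Nat.card C.carrier ≤ Nat.card Z * Nat.card D.carrier := by
          have hb : (T.biUnion (fun C => C.carrier.toFinset)).card =
              ∑ C ∈ T, C.carrier.toFinset.card := by
            apply Finset.card_biUnion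
            intro C₁ h₁ C₂ h₂ hne
            rw [Function.onFun, Finset.disjoint_left]
            intro a ha₁ ha₂
            rw [Set.mem_toFinset, ConjClasses.mem_carrier_iff_mk_eq] at ha₁ ha₂
            exact hne (ha₁ ▸ ha₂ ▸ rfl)
          have hsub : T.biUnion (fun C => C.carrier.toFinset) ⊆
              (QuotientGroup.mk (s := Z) ⁻¹' D.carrier).toFinset := by
            intro a ha
            rw [Finset.mem_biUnion] at ha
            obtain ⟨C, hC, haC⟩ := ha
            rw [Set.mem_toFinset] at haC
            rw [Set.mem_toFinset]
            have hCD : φ C = D := (Finset.mem_filter.mp hC).2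
            have : π a ∈ (φ C).carrier := by
              rw [hφdef, carrier_map_surj π hπ C]
              exact ⟨a, haC, rfl⟩
            rw [hCD] at this
            exact this
          have hpre : (QuotientGroup.mk (s := Z) ⁻¹' D.carrier).toFinset.card =
              Nat.card Z * Nat.card D.carrier := by
            rw [← Set.ncard_eq_toFinset_card', ← Nat.card_coe_set_eq,
              Nat.card_congr (QuotientGroup.preimageMkEquivSubgroupProdSet Z D.carrier),
              Nat.card_prod]
          calc ∑ C ∈ T, Nat.card C.carrier = ∑ C ∈ T, C.carrier.toFinset.card := by
                refine Finset.sum_congr rfl fun C _ => ?_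
                rw [Nat.card_coe_set_eq, Set.ncard_eq_toFinset_card']
            _ = (T.biUnion (fun C => C.carrier.toFinset)).card := hb.symm
            _ ≤ (QuotientGroup.mk (s := Z) ⁻¹' D.carrier).toFinset.card :=
                Finset.card_le_card hsub
            _ = Nat.card Z * Nat.card D.carrier := hpre
        have hTcard : T.card ≤ Nat.card Z := by
          have h1 : T.card * Nat.card D.carrier ≤ Nat.card Z * Nat.card D.carrier := by
            calc T.card * Nat.card D.carrier = ∑ _C ∈ T, Nat.card D.carrier := by
                  rw [Finset.sum_const, smul_eq_mul]
              _ ≤ ∑ C ∈ T, Nat.card C.carrier := Finset.sum_le_sum hkey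
              _ ≤ Nat.card Z * Nat.card D.carrier := hsum_le
          exact Nat.le_of_mul_le_mul_right h1 (by omega)
        have hfQ0 : 0 ≤ fQ D := by positivity
        calc ∑ C ∈ T, f C ≤ T.card • fQ D := Finset.sum_le_card_nsmul T f (fQ D) hfle
          _ = (T.card : ℝ) * fQ D := nsmul_eq_mul _ _
          _ ≤ (Nat.card Z : ℝ) * fQ D := by
              apply mul_le_mul_of_nonneg_right _ hfQ0
              exact_mod_cast hTcard
      -- sum over fibers
      have htotal : ∑ C : ConjClasses G, f C =
          ∑ D : ConjClasses (G ⧸ Z), ∑ C ∈ Finset.univ.filter (fun C => φ C = D), f C :=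
        (Finset.sum_fiberwise Finset.univ φ f).symm
      have hK0 : (0:ℝ) ≤ (1/6) * (1 + ((2:ℝ))⁻¹ ^ m + ((3:ℝ))⁻¹ ^ m) := by positivity
      calc ∑ C : ConjClasses G, f C
          ≤ ∑ D : ConjClasses (G ⧸ Z), (Nat.card Z : ℝ) * fQ D := by
            rw [htotal]
            exact Finset.sum_le_sum fun D _ => hfib D
        _ = (Nat.card Z : ℝ) * ∑ D : ConjClasses (G ⧸ Z), fQ D := by
            rw [Finset.mul_sum]
        _ ≤ (Nat.card Z : ℝ) * ((Nat.card (G ⧸ Z) : ℝ) *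
              ((1/6) * (1 + ((2:ℝ))⁻¹ ^ m + ((3:ℝ))⁻¹ ^ m))) := by
            apply mul_le_mul_of_nonneg_left IH (by positivity)
        _ = (Nat.card G : ℝ) * ((1/6) * (1 + ((2:ℝ))⁻¹ ^ m + ((3:ℝ))⁻¹ ^ m)) := by
            rw [hcard]
            push_cast
            ring

end Main

/-- **Theorem (dual genus-h nilpotency criterion).**
If `q̃_h(G) > q̃_h(S_3) = (1/6)(1 + 1/2^(h-1) + 1/3^(h-1))`, then `G` is nilpotent.
Here `q̃_h(G) = (1/|G|) * Σ_{C ∈ Cl(G)} (1/|C|)^(h-1)`, the sum running over the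
conjugacy classes of `G`. -/
theorem qth_gt_S3_imp_nilpotent (G : Type) [Group G] [Fintype G] (h : ℕ) (hh : 1 ≤ h)
    (hq : (Nat.card G : ℝ)⁻¹ * ∑ᶠ c : ConjClasses G, ((Nat.card c.carrier : ℝ))⁻¹ ^ (h - 1)
          > (1 / 6) * (1 + 1 / 2 ^ (h - 1) + 1 / 3 ^ (h - 1))) :
    Group.IsNilpotent G := by
  by_contra hnil
  have hb := main_bound (h - 1) (Nat.card G) G rfl hnil
  have hn0 : (0:ℝ) < (Nat.card G : ℝ) := by
    exact_mod_cast (Nat.card_pos : 0 < Nat.card G)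
  have hconv : (1 / 6 : ℝ) * (1 + 1 / 2 ^ (h-1) + 1 / 3 ^ (h-1)) =
      (1/6) * (1 + ((2:ℝ))⁻¹ ^ (h-1) + ((3:ℝ))⁻¹ ^ (h-1)) := by
    rw [inv_pow, inv_pow]
    norm_num
  rw [hconv] at hq
  have h2 : (Nat.card G : ℝ)⁻¹ * (∑ᶠ c : ConjClasses G, ((Nat.card c.carrier : ℝ))⁻¹ ^ (h-1)) ≤
      (Nat.card G : ℝ)⁻¹ * ((Nat.card G : ℝ) *
        ((1/6) * (1 + ((2:ℝ))⁻¹ ^ (h-1) + ((3:ℝ))⁻¹ ^ (h-1)))) :=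
    mul_le_mul_of_nonneg_left hb (by positivity)
  rw [← mul_assoc, inv_mul_cancel₀ hn0.ne', one_mul] at h2
  linarith
end

section
/- Let G be a finite group, let N be a normal subgroup of G, and let h be a positive integer. Then q̃_h(G) ≤ q̃_h(G/N). -/
open Finset

-- fiber card under ConjClasses.mk equals carrier card
lemma fiber_card_eq (H : Type*) [Group H] (c : ConjClasses H) :
    Nat.card {g : H // ConjClasses.mk g = c} = Nat.card c.carrier := by
  exact Nat.card_congr (Equiv.subtypeEquivRight (fun g => by
    simp [ConjClasses.mem_carrier_iff_mk_eq])).symm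

-- class sum to element sum
lemma class_to_elt (H : Type*) [Group H] [Fintype H] (h : ℕ) (hh : 1 ≤ h) :
    ∑ᶠ c : ConjClasses H, ((Nat.card c.carrier : ℝ))⁻¹ ^ (h - 1)
      = ∑ g : H, ((Nat.card (ConjClasses.mk g).carrier : ℝ))⁻¹ ^ h := by
  classical
  have : Fintype (ConjClasses H) := Fintype.ofFinite _
  rw [finsum_eq_sum_of_fintype]
  rw [← Fintype.sum_fiberwise' (ConjClasses.mk)
    (fun c : ConjClasses H => ((Nat.card c.carrier : ℝ))⁻¹ ^ h)]
  refine Finset.sum_congr rfl fun c _ => ?_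
  rw [Finset.sum_const, Finset.card_univ, nsmul_eq_mul]
  have hcard : (Fintype.card {g : H // ConjClasses.mk g = c} : ℝ)
      = (Nat.card c.carrier : ℝ) := by
    rw [← fiber_card_eq H c, Nat.card_eq_fintype_card]
  rw [hcard]
  have hne : c.carrier.Nonempty := by
    obtain ⟨g, rfl⟩ := ConjClasses.mk_surjective c
    exact ⟨g, by simp [ConjClasses.mem_carrier_iff_mk_eq]⟩
  have hpos : (0:ℝ) < (Nat.card c.carrier : ℝ) := by
    have := hne.to_subtype
    exact_mod_cast Nat.card_pos
  obtain ⟨k, rfl⟩ : ∃ k, h = k + 1 := ⟨h - 1, (Nat.succ_pred_eq_of_pos hh).symm⟩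
  simp only [Nat.add_sub_cancel]
  set x : ℝ := (Nat.card c.carrier : ℝ) with hx
  rw [pow_succ, mul_comm (x⁻¹ ^ k), ← mul_assoc, mul_inv_cancel₀ (ne_of_gt hpos), one_mul]

-- quotient class is image of class, hence smaller
lemma quot_class_le (G : Type) [Group G] [Fintype G] (N : Subgroup G) [N.Normal] (g : G) :
    Nat.card (ConjClasses.mk (QuotientGroup.mk g : G ⧸ N)).carrier
      ≤ Nat.card (ConjClasses.mk g).carrier := by
  have hfin : Finite ((ConjClasses.mk g).carrier : Set G) := Set.toFinite _
  refine Nat.card_le_card_of_surjective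
    (fun x => ⟨QuotientGroup.mk x.1, ?_⟩) ?_
  · have hx := x.2
    rw [ConjClasses.mem_carrier_iff_mk_eq, ConjClasses.mk_eq_mk_iff_isConj] at hx ⊢
    exact (QuotientGroup.mk' N).map_isConj hx
  · rintro ⟨y, hy⟩
    rw [ConjClasses.mem_carrier_iff_mk_eq, ConjClasses.mk_eq_mk_iff_isConj] at hy
    obtain ⟨c, hc⟩ := isConj_iff.1 hy.symm
    obtain ⟨a, ha⟩ := QuotientGroup.mk_surjective c
    refine ⟨⟨a * g * a⁻¹, ?_⟩, ?_⟩
    · rw [ConjClasses.mem_carrier_iff_mk_eq, ConjClasses.mk_eq_mk_iff_isConj]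
      exact (isConj_iff.2 ⟨a, rfl⟩).symm
    · simp only [Subtype.mk.injEq]
      rw [← hc, ← ha]
      simp

-- fibers of the quotient map have cardinality |N|
lemma fiber_equiv_subgroup (G : Type) [Group G] (N : Subgroup G) [N.Normal] (q : G ⧸ N) :
    Nat.card {g : G // QuotientGroup.mk g = q} = Nat.card N := by
  obtain ⟨g₀, rfl⟩ := QuotientGroup.mk_surjective q
  refine (Nat.card_congr ?_).symm
  refine ⟨fun n => ⟨g₀ * n, ?_⟩, fun x => ⟨g₀⁻¹ * x.1, ?_⟩, ?_, ?_⟩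
  · rw [QuotientGroup.mk_mul, (QuotientGroup.eq_one_iff (n : G)).2 n.2, mul_one]
  · have := x.2
    rw [eq_comm, QuotientGroup.eq] at this
    exact this
  · intro n; ext; simp
  · intro x; ext; simp


/-- **Lemma (monotonicity of `q̃_h` with respect to quotients).**
If `N` is a normal subgroup of the finite group `G`, then `q̃_h(G) ≤ q̃_h(G/N)`.
Here `q̃_h(G) = (1/|G|) * Σ_{C ∈ Cl(G)} (1/|C|)^(h-1)`, the sum running over the
conjugacy classes of `G`. -/
theorem qth_le_quotient (G : Type) [Group G] [Fintype G] (N : Subgroup G) [N.Normal]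
    (h : ℕ) (hh : 1 ≤ h) :
    (Nat.card G : ℝ)⁻¹ * ∑ᶠ c : ConjClasses G, ((Nat.card c.carrier : ℝ))⁻¹ ^ (h - 1)
      ≤ (Nat.card (G ⧸ N) : ℝ)⁻¹ *
          ∑ᶠ c : ConjClasses (G ⧸ N), ((Nat.card c.carrier : ℝ))⁻¹ ^ (h - 1) := by
  classical
  have : Fintype (G ⧸ N) := Fintype.ofFinite _
  rw [class_to_elt G h hh, class_to_elt (G ⧸ N) h hh]
  -- cardinality positivity facts
  have hGpos : (0:ℝ) < Nat.card G := by exact_mod_cast Nat.card_pos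
  have hQpos : (0:ℝ) < Nat.card (G ⧸ N) := by exact_mod_cast Nat.card_pos
  have hNpos : (0:ℝ) < Nat.card N := by exact_mod_cast Nat.card_pos
  -- pointwise comparison
  have step1 : ∑ g : G, ((Nat.card (ConjClasses.mk g).carrier : ℝ))⁻¹ ^ h
      ≤ ∑ g : G, ((Nat.card (ConjClasses.mk (QuotientGroup.mk g : G ⧸ N)).carrier : ℝ))⁻¹ ^ h := by
    refine Finset.sum_le_sum fun g _ => ?_
    refine pow_le_pow_left₀ (by positivity) ?_ h
    have hpos : (0:ℝ) < (Nat.card (ConjClasses.mk (QuotientGroup.mk g : G ⧸ N)).carrier : ℝ) := by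
      have : (QuotientGroup.mk g : G ⧸ N) ∈
          (ConjClasses.mk (QuotientGroup.mk g : G ⧸ N)).carrier := by
        rw [ConjClasses.mem_carrier_iff_mk_eq]
      have := Set.nonempty_of_mem this
      have := this.to_subtype
      exact_mod_cast Nat.card_pos
    exact inv_anti₀ hpos (by exact_mod_cast quot_class_le G N g)
  -- regroup the right side by fibers
  have step2 : ∑ g : G, ((Nat.card (ConjClasses.mk (QuotientGroup.mk g : G ⧸ N)).carrier : ℝ))⁻¹ ^ h
      = (Nat.card N : ℝ) *
        ∑ q : G ⧸ N, ((Nat.card (ConjClasses.mk q).carrier : ℝ))⁻¹ ^ h := by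
    rw [← Fintype.sum_fiberwise' (QuotientGroup.mk (s := N))
      (fun q : G ⧸ N => ((Nat.card (ConjClasses.mk q).carrier : ℝ))⁻¹ ^ h), Finset.mul_sum]
    refine Finset.sum_congr rfl fun q _ => ?_
    rw [Finset.sum_const, Finset.card_univ, nsmul_eq_mul]
    congr 1
    rw [← Nat.card_eq_fintype_card, fiber_equiv_subgroup G N q]
  calc (Nat.card G : ℝ)⁻¹ * ∑ g : G, ((Nat.card (ConjClasses.mk g).carrier : ℝ))⁻¹ ^ h
      ≤ (Nat.card G : ℝ)⁻¹ *
        ∑ g : G, ((Nat.card (ConjClasses.mk (QuotientGroup.mk g : G ⧸ N)).carrier : ℝ))⁻¹ ^ h :=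
        mul_le_mul_of_nonneg_left step1 (by positivity)
    _ = (Nat.card (G ⧸ N) : ℝ)⁻¹ *
        ∑ q : G ⧸ N, ((Nat.card (ConjClasses.mk q).carrier : ℝ))⁻¹ ^ h := by
        rw [step2, Subgroup.card_eq_card_quotient_mul_card_subgroup N]
        push_cast
        rw [mul_inv]
        field_simp
end

section
/- Let G be a finite nonabelian group, let n be the smallest size of a noncentral conjugacy class of G, let h ≥ 2 be an integer, and let N be an integer such that d(G)/q̃_h(G) ≤ N. Then either n^{h-1} ≤ N, or [G : Z(G)] ≤ N/(q̃_h(G)·(N+1) − d(G)) ≤ d(G)/q̃_h(G)^2, where Z(G) denotes the center of G. -/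
/-- The dual invariant `q̃_h(G) = (1/|G|) * Σ_{C ∈ Cl(G)} (1/|C|)^(h-1)`, the sum
running over the conjugacy classes of `G`. -/
noncomputable def qtilde (G : Type) [Group G] (h : ℕ) : ℝ :=
  (Nat.card G : ℝ)⁻¹ * ∑ᶠ c : ConjClasses G, ((Nat.card c.carrier : ℝ))⁻¹ ^ (h - 1)

/-- The commuting probability `d(G) = k(G)/|G|`, where `k(G)` is the number of
conjugacy classes of `G`. -/
noncomputable def dG (G : Type) [Group G] : ℝ :=
  (Nat.card (ConjClasses G) : ℝ) / (Nat.card G : ℝ)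

/-- **Lemma.** Let `G` be a finite nonabelian group, `n` the smallest size of a
noncentral conjugacy class of `G` (i.e. a class of size `> 1`), `h ≥ 2` an integer,
and `N` an integer with `d(G)/q̃_h(G) ≤ N`. Then either `n^(h-1) ≤ N`, or
`[G : Z(G)] ≤ N/(q̃_h(G)(N+1) - d(G)) ≤ d(G)/q̃_h(G)^2`. -/
theorem qtilde_dichotomy (G : Type) [Group G] [Fintype G]
    (hnab : ∃ a b : G, a * b ≠ b * a)
    (h : ℕ) (hh : 2 ≤ h)
    (n : ℕ)
    (hn1 : ∃ c : ConjClasses G, 1 < Nat.card c.carrier ∧ Nat.card c.carrier = n)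
    (hn2 : ∀ c : ConjClasses G, 1 < Nat.card c.carrier → n ≤ Nat.card c.carrier)
    (N : ℤ) (hN : dG G / qtilde G h ≤ (N : ℝ)) :
    (n : ℝ) ^ (h - 1) ≤ (N : ℝ) ∨
      (((Subgroup.center G).index : ℝ) ≤ (N : ℝ) / (qtilde G h * ((N : ℝ) + 1) - dG G) ∧
        (N : ℝ) / (qtilde G h * ((N : ℝ) + 1) - dG G) ≤ dG G / (qtilde G h) ^ 2) := by
  classical
  letI : Fintype (ConjClasses G) := Fintype.ofFinite _
  -- carrier facts
  have hcar1 : ∀ c : ConjClasses G, 1 ≤ Nat.card c.carrier := by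
    intro c
    obtain ⟨a, rfl⟩ := c.exists_rep
    have : a ∈ (ConjClasses.mk a).carrier := ConjClasses.mem_carrier_mk
    have : Nonempty (ConjClasses.mk a).carrier := ⟨⟨a, this⟩⟩
    exact Nat.one_le_iff_ne_zero.mpr (Nat.card_pos).ne'
  have hg : (0:ℝ) < (Nat.card G : ℝ) := by exact_mod_cast Nat.card_pos
  set S : ℝ := ∑ᶠ c : ConjClasses G, ((Nat.card c.carrier : ℝ))⁻¹ ^ (h - 1) with hSdef
  have hSsum : S = ∑ c : ConjClasses G, ((Nat.card c.carrier : ℝ))⁻¹ ^ (h - 1) :=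
    finsum_eq_sum_of_fintype _
  have hq : qtilde G h = (Nat.card G : ℝ)⁻¹ * S := rfl
  have hd : dG G = (Nat.card (ConjClasses G) : ℝ) / (Nat.card G : ℝ) := rfl
  have hterm_pos : ∀ c : ConjClasses G, (0:ℝ) < ((Nat.card c.carrier : ℝ))⁻¹ ^ (h - 1) := by
    intro c
    have : (0:ℝ) < (Nat.card c.carrier : ℝ) := by exact_mod_cast hcar1 c
    positivity
  have hterm_le1 : ∀ c : ConjClasses G, ((Nat.card c.carrier : ℝ))⁻¹ ^ (h - 1) ≤ 1 := by
    intro c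
    have h1 : (1:ℝ) ≤ (Nat.card c.carrier : ℝ) := by exact_mod_cast hcar1 c
    have : ((Nat.card c.carrier : ℝ))⁻¹ ≤ 1 := inv_le_one_of_one_le₀ h1
    calc ((Nat.card c.carrier : ℝ))⁻¹ ^ (h-1) ≤ 1 ^ (h-1) :=
          pow_le_pow_left₀ (by positivity) this _
      _ = 1 := one_pow _
  have hSpos : 0 < S := by
    rw [hSsum]
    exact Finset.sum_pos (fun c _ => hterm_pos c) Finset.univ_nonempty
  have hSk : S ≤ (Nat.card (ConjClasses G) : ℝ) := by
    rw [hSsum, Nat.card_eq_fintype_card, ← Finset.card_univ]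
    calc ∑ c : ConjClasses G, ((Nat.card c.carrier : ℝ))⁻¹ ^ (h - 1)
        ≤ ∑ _c : ConjClasses G, (1:ℝ) := Finset.sum_le_sum (fun c _ => hterm_le1 c)
      _ = (Finset.univ.card : ℝ) := by simp
  have hqpos : 0 < qtilde G h := by rw [hq]; positivity
  have hdq : qtilde G h ≤ dG G := by
    rw [hq, hd, div_eq_inv_mul]
    exact mul_le_mul_of_nonneg_left hSk (by positivity)
  have hdpos : 0 < dG G := lt_of_lt_of_le hqpos hdq
  have hN1 : (1:ℝ) ≤ (N:ℝ) := le_trans ((one_le_div hqpos).mpr hdq) hN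
  have hdNq : dG G ≤ (N:ℝ) * qtilde G h := by
    rw [div_le_iff₀ hqpos] at hN; exact hN
  -- main dichotomy
  by_cases hcase : (n : ℝ) ^ (h - 1) ≤ (N : ℝ)
  · exact Or.inl hcase
  right
  -- N + 1 ≤ n ^ (h-1)
  have hNn : (N:ℝ) + 1 ≤ (n:ℝ) ^ (h-1) := by
    have h1 : (N:ℝ) < ((n ^ (h-1) : ℕ) : ℝ) := by push_cast; exact lt_of_not_ge hcase
    have h2 : N < ((n ^ (h-1) : ℕ) : ℤ) := by exact_mod_cast h1
    have h3 : N + 1 ≤ ((n ^ (h-1) : ℕ) : ℤ) := by omega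
    have h4 : ((N:ℝ) + 1) ≤ (((n ^ (h-1) : ℕ) : ℤ) : ℝ) := by exact_mod_cast h3
    push_cast at h4; exact h4
  have hNp1 : (0:ℝ) < (N:ℝ) + 1 := by linarith
  -- split the sum into central / noncentral classes
  set p : ConjClasses G → Prop := fun c => c.carrier.Nontrivial with hp
  have hsplit : S = (∑ c ∈ Finset.univ.filter p, ((Nat.card c.carrier : ℝ))⁻¹ ^ (h - 1))
      + ∑ c ∈ Finset.univ.filter (fun c => ¬ p c), ((Nat.card c.carrier : ℝ))⁻¹ ^ (h - 1) := by
    rw [hSsum, Finset.sum_filter_add_sum_filter_not]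
  -- central classes contribute 1 each
  have hcent : ∀ c ∈ Finset.univ.filter (fun c => ¬ p c),
      ((Nat.card c.carrier : ℝ))⁻¹ ^ (h - 1) = 1 := by
    intro c hc
    simp only [Finset.mem_filter] at hc
    have h1 : Nat.card c.carrier = 1 := by
      have h2 : ¬ 1 < Nat.card c.carrier := fun hlt =>
        hc.2 (Set.nontrivial_coe_sort.mp (Finite.one_lt_card_iff_nontrivial.mp hlt))
      have := hcar1 c
      omega
    rw [h1]; simp
  -- noncentral classes contribute at most (N+1)⁻¹ each
  have hnonc : ∀ c ∈ Finset.univ.filter p,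
      ((Nat.card c.carrier : ℝ))⁻¹ ^ (h - 1) ≤ ((N:ℝ) + 1)⁻¹ := by
    intro c hc
    simp only [Finset.mem_filter] at hc
    have h1 : 1 < Nat.card c.carrier :=
      Finite.one_lt_card_iff_nontrivial.mpr (Set.nontrivial_coe_sort.mpr hc.2)
    have h2 : (n:ℝ) ≤ (Nat.card c.carrier : ℝ) := by exact_mod_cast hn2 c h1
    have hn0 : (0:ℝ) ≤ (n:ℝ) := by positivity
    have h3 : (N:ℝ) + 1 ≤ (Nat.card c.carrier : ℝ) ^ (h-1) :=
      le_trans hNn (pow_le_pow_left₀ hn0 h2 _)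
    rw [inv_pow]
    exact inv_anti₀ hNp1 h3
  -- center cardinality = number of singleton classes
  have hzcard : Nat.card (Subgroup.center G)
      = (Finset.univ.filter (fun c : ConjClasses G => ¬ p c)).card := by
    have e1 : Nat.card (Subgroup.center G)
        = Nat.card ((ConjClasses.noncenter G)ᶜ : Set (ConjClasses G)) :=
      Nat.card_congr ((ConjClasses.mk_bijOn G).equiv _)
    rw [e1]
    have e2 : ((ConjClasses.noncenter G)ᶜ : Set (ConjClasses G))
        = ↑(Finset.univ.filter (fun c : ConjClasses G => ¬ p c)) := by
      ext c; simp [ConjClasses.mem_noncenter, hp]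
    rw [e2, Nat.card_coe_set_eq, Set.ncard_coe_finset]
  have hz1 : (1:ℝ) ≤ (Nat.card (Subgroup.center G) : ℝ) := by
    exact_mod_cast (Nat.card_pos : 0 < Nat.card (Subgroup.center G))
  have hzpos : (0:ℝ) < (Nat.card (Subgroup.center G) : ℝ) := by linarith
  -- number of noncentral classes
  have hcards : (Finset.univ.filter p).card + (Finset.univ.filter (fun c => ¬ p c)).card
      = Nat.card (ConjClasses G) := by
    rw [Nat.card_eq_fintype_card, ← Finset.card_univ]
    exact Finset.card_filter_add_card_filter_not _
  have hmr : ((Finset.univ.filter p).card : ℝ)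
      = (Nat.card (ConjClasses G) : ℝ) - (Nat.card (Subgroup.center G) : ℝ) := by
    have h1 : ((Finset.univ.filter p).card : ℝ)
        + ((Finset.univ.filter (fun c => ¬ p c)).card : ℝ)
        = (Nat.card (ConjClasses G) : ℝ) := by exact_mod_cast hcards
    rw [hzcard]
    linarith
  -- the key estimate
  have hSle : S ≤ (Nat.card (Subgroup.center G) : ℝ)
      + ((Nat.card (ConjClasses G) : ℝ) - (Nat.card (Subgroup.center G) : ℝ)) * ((N:ℝ) + 1)⁻¹ := by
    rw [hsplit]
    have h1 : ∑ c ∈ Finset.univ.filter (fun c => ¬ p c),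
        ((Nat.card c.carrier : ℝ))⁻¹ ^ (h - 1) = (Nat.card (Subgroup.center G) : ℝ) := by
      rw [Finset.sum_congr rfl hcent, Finset.sum_const, hzcard]
      simp
    have h2 : ∑ c ∈ Finset.univ.filter p, ((Nat.card c.carrier : ℝ))⁻¹ ^ (h - 1)
        ≤ ((Nat.card (ConjClasses G) : ℝ) - (Nat.card (Subgroup.center G) : ℝ)) * ((N:ℝ) + 1)⁻¹ := by
      calc ∑ c ∈ Finset.univ.filter p, ((Nat.card c.carrier : ℝ))⁻¹ ^ (h - 1)
          ≤ ∑ _c ∈ Finset.univ.filter p, ((N:ℝ) + 1)⁻¹ := Finset.sum_le_sum hnonc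
        _ = ((Finset.univ.filter p).card : ℝ) * ((N:ℝ) + 1)⁻¹ := by
            rw [Finset.sum_const]; simp [mul_comm]
        _ = _ := by rw [hmr]
    linarith
  -- algebraic identities
  have hgq : (Nat.card G : ℝ) * qtilde G h = S := by
    rw [hq]; field_simp
  have hgd : (Nat.card G : ℝ) * dG G = (Nat.card (ConjClasses G) : ℝ) := by
    rw [hd]; field_simp
  have hindex : ((Subgroup.center G).index : ℝ) * (Nat.card (Subgroup.center G) : ℝ)
      = (Nat.card G : ℝ) := by
    exact_mod_cast congrArg (Nat.cast : ℕ → ℝ) ((Subgroup.center G).index_mul_card)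
  have hD : 0 < qtilde G h * ((N:ℝ) + 1) - dG G := by nlinarith
  have hkey : (Nat.card G : ℝ) * (qtilde G h * ((N:ℝ) + 1) - dG G)
      ≤ (Nat.card (Subgroup.center G) : ℝ) * (N:ℝ) := by
    have h1 : S * ((N:ℝ) + 1) ≤ (Nat.card (Subgroup.center G) : ℝ) * ((N:ℝ) + 1)
        + ((Nat.card (ConjClasses G) : ℝ) - (Nat.card (Subgroup.center G) : ℝ)) := by
      have h0 := mul_le_mul_of_nonneg_right hSle (le_of_lt hNp1)
      have hne : (N:ℝ) + 1 ≠ 0 := ne_of_gt hNp1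
      calc S * ((N:ℝ) + 1) ≤ ((Nat.card (Subgroup.center G) : ℝ)
            + ((Nat.card (ConjClasses G) : ℝ) - (Nat.card (Subgroup.center G) : ℝ))
              * ((N:ℝ) + 1)⁻¹) * ((N:ℝ) + 1) := h0
        _ = (Nat.card (Subgroup.center G) : ℝ) * ((N:ℝ) + 1)
            + ((Nat.card (ConjClasses G) : ℝ) - (Nat.card (Subgroup.center G) : ℝ)) := by
            field_simp
    nlinarith
  constructor
  · rw [le_div_iff₀ hD]
    have h1 : ((Subgroup.center G).index : ℝ) * (qtilde G h * ((N:ℝ) + 1) - dG G)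
        * (Nat.card (Subgroup.center G) : ℝ)
        ≤ (N:ℝ) * (Nat.card (Subgroup.center G) : ℝ) := by
      calc ((Subgroup.center G).index : ℝ) * (qtilde G h * ((N:ℝ) + 1) - dG G)
            * (Nat.card (Subgroup.center G) : ℝ)
          = (Nat.card G : ℝ) * (qtilde G h * ((N:ℝ) + 1) - dG G) := by
            rw [← hindex]; ring
        _ ≤ (Nat.card (Subgroup.center G) : ℝ) * (N:ℝ) := hkey
        _ = (N:ℝ) * (Nat.card (Subgroup.center G) : ℝ) := by ring
    exact le_of_mul_le_mul_right h1 hzpos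
  · rw [div_le_div_iff₀ hD (by positivity)]
    have hint : 0 ≤ ((N:ℝ) * qtilde G h - dG G) * (dG G - qtilde G h) :=
      mul_nonneg (sub_nonneg.2 hdNq) (sub_nonneg.2 hdq)
    have expand : dG G * (qtilde G h * ((N:ℝ) + 1) - dG G) - (N:ℝ) * qtilde G h ^ 2
        = ((N:ℝ) * qtilde G h - dG G) * (dG G - qtilde G h) := by ring
    linarith
end
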